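/- arXiv:1109.1174 — 8 statements merged into one kernel-verified Lean document; each statement's English description precedes it below -/
import Mathlib

section
/- If K ⊆ [0,1] is a Cantor set of Lebesgue measure zero with {0,1} ⊆ K, then there exists φ ∈ 𝒢 such that K = K_φ. -/
open Set MeasureTheory

/-- The set `D` of dyadic rationals in `(0,1)`. -/
def dyadics : Set ℝ :=
  {x : ℝ | ∃ i k : ℕ, 0 < i ∧ 0 < k ∧ i < 2 ^ k ∧ x = (i : ℝ) / 2 ^ k}

/-- `φ ∈ 𝒢`: a "gap function", i.e. `φ : D → (0,1)` with `∑_{d ∈ D} φ d = 1`. -/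
def IsGapFun (φ : ℝ → ℝ) : Prop :=
  (∀ d ∈ dyadics, φ d ∈ Set.Ioo (0 : ℝ) 1) ∧ HasSum (fun d : dyadics => φ d) 1

/-- `Φ(d) = ∑_{d' ∈ D, d' < d} φ(d')`. -/
noncomputable def PhiFun (φ : ℝ → ℝ) (d : ℝ) : ℝ :=
  ∑' d' : ↥(dyadics ∩ Set.Iio d), φ d'

/-- `K_φ = [0,1] \ ⋃_{d ∈ D} (Φ(d), Φ(d) + φ(d))`. -/
noncomputable def Kset (φ : ℝ → ℝ) : Set ℝ :=
  Set.Icc 0 1 \ ⋃ d ∈ dyadics, Set.Ioo (PhiFun φ d) (PhiFun φ d + φ d)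

/-!
The bounded gaps of `K`, indexed by their left ends, form a countable linear order which is dense
and has no endpoints because `K` is perfect and has empty interior. By Cantor's back-and-forth
theorem it is isomorphic to the dyadic rationals of `(0, 1)`; let `φ d` be the length of the gap
attached to `d`. As `K` is null, the gaps to the left of a point `t ∈ K` have total length `t`,
so `Φ d` is the left end of the gap attached to `d` and the intervals removed in `K_φ` are
exactly the gaps of `K`.
-/

section Dyadics

lemma mem_dyadics_iff {x : ℝ} :
    x ∈ dyadics ↔ (∃ i k : ℕ, x = (i : ℝ) / 2 ^ k) ∧ 0 < x ∧ x < 1 := by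
  constructor
  · rintro ⟨i, k, hi, -, hik, rfl⟩
    refine ⟨⟨i, k, rfl⟩, by positivity, ?_⟩
    rw [div_lt_one (by positivity)]
    exact_mod_cast hik
  · rintro ⟨⟨i, k, rfl⟩, hx0, hx1⟩
    have hi : 0 < i := by
      rcases Nat.eq_zero_or_pos i with rfl | hi
      · simp at hx0
      · exact hi
    have hik : i < 2 ^ k := by
      rw [div_lt_one (by positivity)] at hx1
      exact_mod_cast hx1
    -- the exponent must be positive, so write `i / 2^k` as `2i / 2^(k+1)`
    refine ⟨2 * i, k + 1, by omega, by omega, by rw [pow_succ]; omega, ?_⟩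
    push_cast
    rw [pow_succ]
    field_simp

lemma add_div_two_mem_dyadics {a b : ℝ} (ha : ∃ i k : ℕ, a = (i : ℝ) / 2 ^ k)
    (hb : ∃ j m : ℕ, b = (j : ℝ) / 2 ^ m) (ha0 : 0 ≤ a) (hab : a < b) (hb1 : b ≤ 1) :
    (a + b) / 2 ∈ dyadics := by
  obtain ⟨i, k, rfl⟩ := ha
  obtain ⟨j, m, rfl⟩ := hb
  refine mem_dyadics_iff.mpr ⟨⟨i * 2 ^ m + j * 2 ^ k, k + m + 1, ?_⟩, by linarith, by linarith⟩
  push_cast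
  field_simp
  ring

lemma dyadics_countable : dyadics.Countable :=
  (countable_range fun p : ℕ × ℕ => (p.1 : ℝ) / 2 ^ p.2).mono <| by
    rintro _ ⟨i, k, -, -, -, rfl⟩
    exact ⟨(i, k), rfl⟩

instance : Countable dyadics := dyadics_countable.to_subtype

instance : Nonempty dyadics :=
  ⟨⟨1 / 2, mem_dyadics_iff.mpr ⟨⟨1, 1, by norm_num⟩, by norm_num, by norm_num⟩⟩⟩

instance : DenselyOrdered dyadics where
  dense a b hab := by
    obtain ⟨ha, ha0, -⟩ := mem_dyadics_iff.mp a.2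
    obtain ⟨hb, -, hb1⟩ := mem_dyadics_iff.mp b.2
    have hab : (a : ℝ) < b := hab
    exact ⟨⟨_, add_div_two_mem_dyadics ha hb ha0.le hab hb1.le⟩,
      show (a : ℝ) < (a + b) / 2 by linarith, show (a + b) / 2 < (b : ℝ) by linarith⟩

instance : NoMinOrder dyadics where
  exists_lt a := by
    obtain ⟨ha, ha0, ha1⟩ := mem_dyadics_iff.mp a.2
    exact ⟨⟨_, add_div_two_mem_dyadics ⟨0, 0, by simp⟩ ha le_rfl ha0 ha1.le⟩,
      show (0 + a) / 2 < (a : ℝ) by linarith⟩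

instance : NoMaxOrder dyadics where
  exists_gt a := by
    obtain ⟨ha, ha0, ha1⟩ := mem_dyadics_iff.mp a.2
    exact ⟨⟨_, add_div_two_mem_dyadics ha ⟨1, 0, by simp⟩ ha0.le ha1 le_rfl⟩,
      show (a : ℝ) < (a + 1) / 2 by linarith⟩

end Dyadics

/-- The right end of the gap of `K` starting at `a`, when `a ∈ gapStarts K`. -/
noncomputable def gapEnd (K : Set ℝ) (a : ℝ) : ℝ := sInf (K ∩ Ioi a)

/-- Left ends of the bounded open intervals complementary to `K`. -/
def gapStarts (K : Set ℝ) : Set ℝ := {a ∈ K | (K ∩ Ioi a).Nonempty ∧ a < gapEnd K a}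

section Gaps

variable {K : Set ℝ} {a b s t u v x : ℝ}

lemma gapEnd_le (ht : t ∈ K) (hat : a < t) : gapEnd K a ≤ t :=
  csInf_le ⟨a, fun _ hy => hy.2.le⟩ ⟨ht, hat⟩

lemma disjoint_Ioo_gapEnd (K : Set ℝ) (a : ℝ) : Disjoint (Ioo a (gapEnd K a)) K :=
  disjoint_left.mpr fun _ hx hxK => (gapEnd_le hxK hx.1).not_gt hx.2

lemma IsClosed.gapEnd_mem (hK : IsClosed K) (h : (K ∩ Ioi a).Nonempty) : gapEnd K a ∈ K :=
  hK.closure_subset_iff.mpr inter_subset_left (csInf_mem_closure h ⟨a, fun _ hy => hy.2.le⟩)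

lemma pairwiseDisjoint_Ioo_gapEnd (K : Set ℝ) :
    K.PairwiseDisjoint fun a => Ioo a (gapEnd K a) := by
  have key : ∀ a ∈ K, ∀ b ∈ K, a < b → Disjoint (Ioo a (gapEnd K a)) (Ioo b (gapEnd K b)) :=
    fun a _ b hb hab => (Iio_disjoint_Ici (gapEnd_le hb hab)).mono Ioo_subset_Iio_self
      (Ioo_subset_Ioi_self.trans Ioi_subset_Ici_self)
  intro a ha b hb hne
  rcases hne.lt_or_gt with hab | hba
  · exact key a ha b hb hab
  · exact (key b hb a ha hba).symm

lemma countable_gapStarts (K : Set ℝ) : (gapStarts K).Countable :=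
  ((pairwiseDisjoint_Ioo_gapEnd K).subset fun _ ha => ha.1).countable_of_Ioo fun _ ha => ha.2.2

/-- The gap containing `x` starts at the last point of `K` below `x`. -/
lemma IsClosed.exists_mem_gapStarts (hK : IsClosed K) (hx : x ∉ K)
    (hlo : (K ∩ Iio x).Nonempty) (hhi : (K ∩ Ioi x).Nonempty) :
    ∃ a ∈ gapStarts K, x ∈ Ioo a (gapEnd K a) := by
  have hbdd : BddAbove (K ∩ Iic x) := ⟨x, fun _ hy => hy.2⟩
  obtain ⟨hlK, hlx⟩ := (hK.inter isClosed_Iic).csSup_mem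
    (hlo.mono (inter_subset_inter_right _ Iio_subset_Iic_self)) hbdd
  set l := sSup (K ∩ Iic x)
  have hlx : l < x := hlx.lt_of_ne fun h => hx (h ▸ hlK)
  have hne : (K ∩ Ioi l).Nonempty :=
    hhi.mono (inter_subset_inter_right _ (Ioi_subset_Ioi hlx.le))
  have hxr : x ≤ gapEnd K l := le_csInf hne fun y ⟨hyK, hly⟩ =>
    le_of_not_gt fun hyx => hly.not_ge (le_csSup hbdd ⟨hyK, hyx.le⟩)
  have hxr : x < gapEnd K l := hxr.lt_of_ne fun h => hx (h ▸ hK.gapEnd_mem hne)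
  exact ⟨l, ⟨hlK, hne, hlx.trans hxr⟩, hlx, hxr⟩

lemma IsClosed.exists_gapStarts_between (hK : IsClosed K)
    (hnoint : ∀ a b : ℝ, a < b → ¬ Ioo a b ⊆ K) (hu : u ∈ K) (hv : v ∈ K) (huv : u < v) :
    ∃ a ∈ gapStarts K, u ≤ a ∧ gapEnd K a ≤ v := by
  obtain ⟨x, hx, hxK⟩ := not_subset.mp (hnoint u v huv)
  obtain ⟨a, ha, hxa⟩ := hK.exists_mem_gapStarts hxK ⟨u, hu, hx.1⟩ ⟨v, hv, hx.2⟩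
  refine ⟨a, ha, le_of_not_gt fun hua => ?_, gapEnd_le hv (hxa.1.trans hx.2)⟩
  exact disjoint_left.mp (disjoint_Ioo_gapEnd K a) ⟨hua, hx.1.trans hxa.2⟩ hu

lemma Perfect.false_of_disjoint_Ioo (hK : Perfect K) (hb : b ∈ K) (hu : u < b) (hv : b < v)
    (hleft : Disjoint (Ioo u b) K) (hright : Disjoint (Ioo b v) K) : False := by
  obtain ⟨y, ⟨hy, hyK⟩, hyb⟩ := accPt_iff_nhds.mp (hK.acc b hb) _ (Ioo_mem_nhds hu hv)
  rcases hyb.lt_or_gt with h | h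
  · exact disjoint_left.mp hleft ⟨hy.1, h⟩ hyK
  · exact disjoint_left.mp hright ⟨h, hy.2⟩ hyK

/-- In a perfect set two gaps never share an endpoint. -/
lemma Perfect.gapEnd_lt (hK : Perfect K) (hb : b ∈ gapStarts K) (hab : a < b) :
    gapEnd K a < b := by
  refine (gapEnd_le hb.1 hab).lt_of_ne fun h => ?_
  exact hK.false_of_disjoint_Ioo hb.1 hab hb.2.2 (h ▸ disjoint_Ioo_gapEnd K a)
    (disjoint_Ioo_gapEnd K b)

lemma IsClosed.iUnion_Ioo_gapEnd (hK : IsClosed K) (hs : s ∈ K) (hKs : K ⊆ Ici s) (ht : t ∈ K) :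
    ⋃ g : ↥(gapStarts K ∩ Iio t), Ioo (g : ℝ) (gapEnd K g) = Ioo s t \ K := by
  ext x
  simp only [mem_iUnion, mem_sdiff, mem_Ioo]
  constructor
  · rintro ⟨⟨g, hg, hgt⟩, hgx, hxg⟩
    exact ⟨⟨(hKs hg.1).trans_lt hgx, hxg.trans_le (gapEnd_le ht hgt)⟩,
      disjoint_left.mp (disjoint_Ioo_gapEnd K g) ⟨hgx, hxg⟩⟩
  · rintro ⟨⟨hsx, hxt⟩, hxK⟩
    obtain ⟨g, hg, hxg⟩ := hK.exists_mem_gapStarts hxK ⟨s, hs, hsx⟩ ⟨t, ht, hxt⟩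
    exact ⟨⟨g, hg, hxg.1.trans hxt⟩, hxg⟩

/-- A null set is the complement of its gaps, so their lengths add up to the whole length. -/
lemma IsClosed.hasSum_gapEnd_sub (hK : IsClosed K) (hvol : volume K = 0) (hs : s ∈ K)
    (hKs : K ⊆ Ici s) (ht : t ∈ K) :
    HasSum (fun g : ↥(gapStarts K ∩ Iio t) => gapEnd K g - g) (t - s) := by
  have : Countable ↥(gapStarts K ∩ Iio t) :=
    ((countable_gapStarts K).mono inter_subset_left).to_subtype
  have hdisj : Pairwise (Function.onFun Disjoint
      fun g : ↥(gapStarts K ∩ Iio t) => Ioo (g : ℝ) (gapEnd K g)) :=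
    (pairwise_subtype_iff_pairwise_set _ _).mpr
      ((pairwiseDisjoint_Ioo_gapEnd K).subset fun _ hg => hg.1.1)
  have hvolsum : ∑' g : ↥(gapStarts K ∩ Iio t), ENNReal.ofReal (gapEnd K g - g)
      = ENNReal.ofReal (t - s) := by
    simp only [← Real.volume_Ioo]
    rw [← measure_iUnion hdisj fun _ => measurableSet_Ioo, hK.iUnion_Ioo_gapEnd hs hKs ht,
      measure_sdiff_null hvol]
  have h := ENNReal.hasSum_toReal (hvolsum ▸ ENNReal.ofReal_ne_top)
  rw [← ENNReal.tsum_toReal_eq fun _ => ENNReal.ofReal_ne_top, hvolsum,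
    ENNReal.toReal_ofReal (sub_nonneg.mpr (hKs ht))] at h
  convert h using 2 with g
  exact (ENNReal.toReal_ofReal (sub_nonneg.mpr g.2.1.2.2.le)).symm

end Gaps

section CantorSet

variable {K : Set ℝ} {a : ℝ}

lemma Perfect.pos_of_mem_gapStarts (hperf : Perfect K) (hsub : K ⊆ Icc 0 1)
    (ha : a ∈ gapStarts K) : 0 < a := by
  refine (hsub ha.1).1.lt_of_ne fun h => ?_
  subst h
  refine hperf.false_of_disjoint_Ioo ha.1 neg_one_lt_zero ha.2.2 ?_ (disjoint_Ioo_gapEnd K 0)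
  exact disjoint_left.mpr fun x hx hxK => hx.2.not_ge (hsub hxK).1

lemma Perfect.gapEnd_lt_one (hperf : Perfect K) (hsub : K ⊆ Icc 0 1)
    (ha : a ∈ gapStarts K) : gapEnd K a < 1 := by
  have hend := hperf.closed.gapEnd_mem ha.2.1
  refine (hsub hend).2.lt_of_ne fun h => ?_
  refine hperf.false_of_disjoint_Ioo hend ha.2.2 (lt_add_one _) (disjoint_Ioo_gapEnd K a) ?_
  exact disjoint_left.mpr fun x hx hxK => hx.1.not_ge (h ▸ (hsub hxK).2)

lemma Perfect.gapStarts_inter_Iio_one (hperf : Perfect K) (hsub : K ⊆ Icc 0 1) :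
    gapStarts K ∩ Iio 1 = gapStarts K :=
  inter_eq_left.mpr fun _ ha => ha.2.2.trans (hperf.gapEnd_lt_one hsub ha)

lemma exists_orderIso_dyadics_gapStarts (hsub : K ⊆ Icc 0 1) (hperf : Perfect K)
    (hnoint : ∀ a b : ℝ, a < b → ¬ Ioo a b ⊆ K) (h0 : (0 : ℝ) ∈ K) (h1 : (1 : ℝ) ∈ K) :
    Nonempty (dyadics ≃o gapStarts K) := by
  have hK := hperf.closed
  have : Countable (gapStarts K) := (countable_gapStarts K).to_subtype
  have : Nonempty (gapStarts K) := by
    obtain ⟨c, hc, -⟩ := hK.exists_gapStarts_between hnoint h0 h1 one_pos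
    exact ⟨⟨c, hc⟩⟩
  have : DenselyOrdered (gapStarts K) := ⟨fun a b hab => by
    obtain ⟨c, hc, hac, hcb⟩ := hK.exists_gapStarts_between hnoint
      (hK.gapEnd_mem a.2.2.1) b.2.1 (hperf.gapEnd_lt b.2 hab)
    exact ⟨⟨c, hc⟩, a.2.2.2.trans_le hac, hc.2.2.trans_le hcb⟩⟩
  have : NoMinOrder (gapStarts K) := ⟨fun a => by
    obtain ⟨c, hc, -, hca⟩ := hK.exists_gapStarts_between hnoint h0 a.2.1
      (hperf.pos_of_mem_gapStarts hsub a.2)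
    exact ⟨⟨c, hc⟩, hc.2.2.trans_le hca⟩⟩
  have : NoMaxOrder (gapStarts K) := ⟨fun a => by
    obtain ⟨c, hc, hac, -⟩ := hK.exists_gapStarts_between hnoint (hK.gapEnd_mem a.2.2.1) h1
      (hperf.gapEnd_lt_one hsub a.2)
    exact ⟨⟨c, hc⟩, a.2.2.2.trans_le hac⟩⟩
  exact Order.iso_of_countable_dense _ _

end CantorSet

def OrderIso.interIioEquiv {α β : Type*} [Preorder α] [Preorder β] {S : Set α} {T : Set β}
    (e : S ≃o T) (s : S) : ↥(S ∩ Iio (s : α)) ≃ ↥(T ∩ Iio (e s : β)) where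
  toFun x := ⟨e ⟨x, x.2.1⟩, (e _).2, e.lt_iff_lt.mpr x.2.2⟩
  invFun y := ⟨e.symm ⟨y, y.2.1⟩, (e.symm _).2, by
    simpa using e.symm.lt_iff_lt.mpr (show (⟨y, y.2.1⟩ : T) < e s from y.2.2)⟩
  left_inv x := by simp
  right_inv y := by simp

open Classical in
noncomputable def gapFun (K : Set ℝ) (e : dyadics ≃o gapStarts K) (x : ℝ) : ℝ :=
  if hx : x ∈ dyadics then gapEnd K (e ⟨x, hx⟩) - e ⟨x, hx⟩ else 0

section GapFun

variable {K : Set ℝ} (e : dyadics ≃o gapStarts K)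

lemma gapFun_apply (d : dyadics) : gapFun K e d = gapEnd K (e d) - e d := by
  rw [gapFun, dif_pos d.2]

lemma PhiFun_gapFun (hK : IsClosed K) (hvol : volume K = 0) (hsub : K ⊆ Icc 0 1)
    (h0 : (0 : ℝ) ∈ K) (d : dyadics) : PhiFun (gapFun K e) d = e d := by
  have h := hK.hasSum_gapEnd_sub hvol h0 (fun _ hx => (hsub hx).1) (e d).2.1
  rw [sub_zero] at h
  rw [PhiFun, ← h.tsum_eq, ← (e.interIioEquiv d).tsum_eq]
  exact tsum_congr fun x => gapFun_apply e ⟨x, x.2.1⟩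

lemma isGapFun_gapFun (hperf : Perfect K) (hvol : volume K = 0) (hsub : K ⊆ Icc 0 1)
    (h0 : (0 : ℝ) ∈ K) (h1 : (1 : ℝ) ∈ K) : IsGapFun (gapFun K e) := by
  refine ⟨fun d hd => ?_, ?_⟩
  · rw [gapFun_apply e ⟨d, hd⟩]
    have hpos := hperf.pos_of_mem_gapStarts hsub (e ⟨d, hd⟩).2
    have hlt := hperf.gapEnd_lt_one hsub (e ⟨d, hd⟩).2
    have hgap := (e ⟨d, hd⟩).2.2.2
    constructor <;> linarith
  · have h := hperf.closed.hasSum_gapEnd_sub hvol h0 (fun _ hx => (hsub hx).1) h1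
    rw [sub_zero, hperf.gapStarts_inter_Iio_one hsub] at h
    convert e.toEquiv.hasSum_iff.mpr h using 2 with d
    exact gapFun_apply e d

lemma Kset_gapFun (hperf : Perfect K) (hvol : volume K = 0) (hsub : K ⊆ Icc 0 1)
    (h0 : (0 : ℝ) ∈ K) (h1 : (1 : ℝ) ∈ K) : Kset (gapFun K e) = K := by
  have hgaps :
      ⋃ d ∈ dyadics, Ioo (PhiFun (gapFun K e) d) (PhiFun (gapFun K e) d + gapFun K e d)
        = ⋃ g : gapStarts K, Ioo (g : ℝ) (gapEnd K g) := by
    rw [biUnion_eq_iUnion, ← e.surjective.iUnion_comp]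
    refine iUnion_congr fun d => ?_
    rw [PhiFun_gapFun e hperf.closed hvol hsub h0, gapFun_apply, add_sub_cancel]
  have hcompl := hperf.closed.iUnion_Ioo_gapEnd h0 (fun _ hx => (hsub hx).1) h1
  rw [hperf.gapStarts_inter_Iio_one hsub] at hcompl
  rw [Kset, hgaps, hcompl, Set.sdiff_sdiff_right, Icc_sdiff_Ioo_same zero_le_one,
    inter_eq_right.mpr hsub]
  exact union_eq_right.mpr (insert_subset h0 (singleton_subset_iff.mpr h1))

end GapFun

theorem stmt_1_general (K : Set ℝ) (hsub : K ⊆ Set.Icc 0 1) (hperf : Perfect K)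
    (hnoint : ∀ a b : ℝ, a < b → ¬ Set.Ioo a b ⊆ K)
    (hvol : volume K = 0) (h0 : (0 : ℝ) ∈ K) (h1 : (1 : ℝ) ∈ K) :
    ∃ φ : ℝ → ℝ, IsGapFun φ ∧ K = Kset φ := by
  obtain ⟨e⟩ := exists_orderIso_dyadics_gapStarts hsub hperf hnoint h0 h1
  exact ⟨gapFun K e, isGapFun_gapFun e hperf hvol hsub h0 h1,
    (Kset_gapFun e hperf hvol hsub h0 h1).symm⟩

/-- If `K ⊆ [0,1]` is a Cantor set (nonempty, compact, perfect, containing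
no nonempty open interval) of Lebesgue measure zero with `{0,1} ⊆ K`, then `K = K_φ`
for some `φ ∈ 𝒢`. -/
theorem stmt_1 (K : Set ℝ) (hsub : K ⊆ Set.Icc 0 1) (hne : K.Nonempty)
    (hcomp : IsCompact K) (hperf : Perfect K)
    (hnoint : ∀ a b : ℝ, a < b → ¬ Set.Ioo a b ⊆ K)
    (hvol : volume K = 0) (h0 : (0 : ℝ) ∈ K) (h1 : (1 : ℝ) ∈ K) :
    ∃ φ : ℝ → ℝ, IsGapFun φ ∧ K = Kset φ :=
  stmt_1_general K hsub hperf hnoint hvol h0 h1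
end

section
/- Suppose φ₁, φ₂ ∈ 𝒢 satisfy K_{φ₁} = K_{φ₂}. Then there is a homeomorphism g of [0,1] onto itself which maps D onto D and satisfies φ₂(d) = φ₁(g(d)) for all d ∈ D. -/
/-!
The gaps `(Φ(d), Φ(d) + φ(d))` of a gap function are pairwise disjoint, ordered like their
labels `d`, and have both endpoints in `K_φ`. Hence, when `K_{φ₁} = K_{φ₂}`, every gap of `φ₂`
meets some gap of `φ₁`, and two such gaps with endpoints outside each other must coincide. This
gives an order isomorphism `f` of `D` with `Φ₁ ∘ f = Φ₂` and `φ₁ ∘ f = φ₂`; since `D` is dense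
in `[0,1]`, `f` extends by `x ↦ sup f(D ∩ [0,x])` to an increasing bijection of `[0,1]`, which
is continuous because its image is an interval.
-/

open Set MeasureTheory

theorem MonotoneOn.continuousOn_of_surjOn_Icc {α β : Type*} [LinearOrder α] [TopologicalSpace α]
    [OrderTopology α] [LinearOrder β] [TopologicalSpace β] [OrderTopology β] [DenselyOrdered β]
    {g : α → β} {a b : α} {c d : β} (hg : MonotoneOn g (Icc a b))
    (hmaps : MapsTo g (Icc a b) (Icc c d)) (hsurj : SurjOn g (Icc a b) (Icc c d)) :
    ContinuousOn g (Icc a b) := by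
  rw [continuousOn_iff_continuous_domRestrict]
  exact continuous_subtype_val.comp <| Monotone.continuous_of_surjective (f := hmaps.restrict)
    (fun x y h => hg x.2 y.2 h) (hmaps.restrict_surjective_iff.2 hsurj)

theorem eq_and_eq_of_mem_Ioo_of_endpoints_notMem {α : Type*} [LinearOrder α] {a b c d x : α}
    (hx₁ : x ∈ Ioo a b) (hx₂ : x ∈ Ioo c d) (ha : a ∉ Ioo c d) (hb : b ∉ Ioo c d)
    (hc : c ∉ Ioo a b) (hd : d ∉ Ioo a b) : a = c ∧ b = d := by
  have hac : a ≤ c := not_lt.1 fun h => ha ⟨h, hx₁.1.trans hx₂.2⟩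
  have hca : c ≤ a := not_lt.1 fun h => hc ⟨h, hx₂.1.trans hx₁.2⟩
  have hbd : b ≤ d := not_lt.1 fun h => hd ⟨hx₁.1.trans hx₂.2, h⟩
  have hdb : d ≤ b := not_lt.1 fun h => hb ⟨hx₂.1.trans hx₁.2, h⟩
  exact ⟨le_antisymm hac hca, le_antisymm hbd hdb⟩

theorem dyadics_subset_Ioo : dyadics ⊆ Ioo (0 : ℝ) 1 := by
  rintro x ⟨i, k, hi, -, hik, rfl⟩
  exact ⟨by positivity, (div_lt_one (by positivity)).2 (by exact_mod_cast hik)⟩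

theorem exists_dyadic_mem_Ioo {a b : ℝ} (ha : 0 ≤ a) (hb : b ≤ 1) (hab : a < b) :
    ∃ d ∈ dyadics, d ∈ Ioo a b := by
  obtain ⟨k, hk⟩ := exists_pow_lt_of_lt_one (sub_pos.2 hab) (by norm_num : (1 / 2 : ℝ) < 1)
  have hk0 : 0 < k := Nat.pos_of_ne_zero (by rintro rfl; simp at hk; linarith)
  have h2k : (0 : ℝ) < 2 ^ k := by positivity
  have hscale : (1 / 2 : ℝ) ^ k * 2 ^ k = 1 := by rw [← mul_pow]; norm_num
  set i := ⌊a * 2 ^ k⌋₊ + 1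
  have hai : a * 2 ^ k < i := by push_cast [i]; exact Nat.lt_floor_add_one _
  have hib : (i : ℝ) < b * 2 ^ k := by
    have := Nat.floor_le (by positivity : 0 ≤ a * 2 ^ k)
    push_cast [i]
    nlinarith
  refine ⟨i / 2 ^ k, ⟨i, k, Nat.zero_lt_succ _, hk0, ?_, rfl⟩,
    (lt_div_iff₀ h2k).2 hai, (div_lt_iff₀ h2k).2 hib⟩
  exact_mod_cast hib.trans_le (by nlinarith : b * 2 ^ k ≤ 2 ^ k)

namespace IsGapFun

variable {φ : ℝ → ℝ} {s t : Set ℝ} {d e : ℝ}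

theorem summable (hφ : IsGapFun φ) (hs : s ⊆ dyadics) : Summable fun x : s => φ x :=
  hφ.2.summable.comp_injective (inclusion_injective hs)

theorem tsum_mono (hφ : IsGapFun φ) (hst : s ⊆ t) (ht : t ⊆ dyadics) :
    ∑' x : s, φ x ≤ ∑' x : t, φ x :=
  Summable.tsum_le_tsum_of_inj (inclusion hst) (inclusion_injective hst)
    (fun c _ => (hφ.1 c (ht c.2)).1.le) (fun _ => le_rfl) (hφ.summable (hst.trans ht))
    (hφ.summable ht)

theorem phiFun_nonneg (hφ : IsGapFun φ) (d : ℝ) : 0 ≤ PhiFun φ d :=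
  tsum_nonneg fun x => (hφ.1 x x.2.1).1.le

theorem phiFun_mono (hφ : IsGapFun φ) : Monotone (PhiFun φ) := fun _ _ h =>
  hφ.tsum_mono (inter_subset_inter_right _ (Iio_subset_Iio h)) inter_subset_left

theorem phiFun_add_eq_tsum (hφ : IsGapFun φ) (hd : d ∈ dyadics) :
    PhiFun φ d + φ d = ∑' x : ↥(dyadics ∩ Iic d), φ x := by
  have hdisj : Disjoint {d} (dyadics ∩ Iio d) :=
    disjoint_singleton_left.2 fun h => lt_irrefl d h.2
  rw [← Iio_insert, inter_insert_of_mem hd, insert_eq,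
    Summable.tsum_union_disjoint hdisj (hφ.summable (singleton_subset_iff.2 hd))
      (hφ.summable inter_subset_left), tsum_singleton, add_comm]
  rfl

theorem phiFun_add_le (hφ : IsGapFun φ) (hd : d ∈ dyadics) (hde : d < e) :
    PhiFun φ d + φ d ≤ PhiFun φ e := by
  rw [hφ.phiFun_add_eq_tsum hd]
  exact hφ.tsum_mono (inter_subset_inter_right _ (Iic_subset_Iio.2 hde)) inter_subset_left

theorem phiFun_add_le_one (hφ : IsGapFun φ) (hd : d ∈ dyadics) : PhiFun φ d + φ d ≤ 1 := by
  rw [hφ.phiFun_add_eq_tsum hd, ← hφ.2.tsum_eq]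
  exact hφ.tsum_mono inter_subset_left subset_rfl

theorem strictMonoOn_phiFun (hφ : IsGapFun φ) : StrictMonoOn (PhiFun φ) dyadics :=
  fun d hd _ _ hde => by linarith [hφ.phiFun_add_le hd hde, (hφ.1 d hd).1]

theorem phiFun_mem_Kset (hφ : IsGapFun φ) (hd : d ∈ dyadics) : PhiFun φ d ∈ Kset φ := by
  refine ⟨⟨hφ.phiFun_nonneg d, by linarith [hφ.phiFun_add_le_one hd, (hφ.1 d hd).1]⟩, ?_⟩
  simp only [mem_iUnion, mem_Ioo, not_exists, not_and, not_lt]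
  intro e he hlt
  rcases lt_or_ge e d with hed | hde
  · exact hφ.phiFun_add_le he hed
  · exact absurd hlt (not_lt.2 (hφ.phiFun_mono hde))

theorem phiFun_add_mem_Kset (hφ : IsGapFun φ) (hd : d ∈ dyadics) :
    PhiFun φ d + φ d ∈ Kset φ := by
  refine ⟨⟨by linarith [hφ.phiFun_nonneg d, (hφ.1 d hd).1], hφ.phiFun_add_le_one hd⟩, ?_⟩
  simp only [mem_iUnion, mem_Ioo, not_exists, not_and, not_lt]
  intro e he hlt
  rcases lt_trichotomy e d with hed | rfl | hde
  · linarith [hφ.phiFun_add_le he hed, (hφ.1 d hd).1]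
  · exact le_rfl
  · exact absurd hlt (not_lt.2 (hφ.phiFun_add_le hd hde))

end IsGapFun

section Kset

variable {φ : ℝ → ℝ} {d x : ℝ}

theorem notMem_Ioo_of_mem_Kset (hx : x ∈ Kset φ) (hd : d ∈ dyadics) :
    x ∉ Ioo (PhiFun φ d) (PhiFun φ d + φ d) :=
  fun h => hx.2 (mem_biUnion hd h)

theorem exists_mem_Ioo_of_notMem_Kset (hx : x ∈ Icc (0 : ℝ) 1) (hxK : x ∉ Kset φ) :
    ∃ d ∈ dyadics, x ∈ Ioo (PhiFun φ d) (PhiFun φ d + φ d) := by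
  by_contra h
  exact hxK ⟨hx, by simpa only [mem_iUnion, exists_prop] using h⟩

end Kset

section Matching

variable {φ₁ φ₂ f f' : ℝ → ℝ}

theorem exists_gap_eq_of_Kset_eq (h₁ : IsGapFun φ₁) (h₂ : IsGapFun φ₂)
    (hK : Kset φ₁ = Kset φ₂) {d : ℝ} (hd : d ∈ dyadics) :
    ∃ e ∈ dyadics, PhiFun φ₁ e = PhiFun φ₂ d ∧ φ₁ e = φ₂ d := by
  obtain ⟨m, hm⟩ := nonempty_Ioo.2 (lt_add_of_pos_right _ (h₂.1 d hd).1)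
  have hmK : m ∉ Kset φ₁ := hK ▸ fun h => notMem_Ioo_of_mem_Kset h hd hm
  obtain ⟨e, he, hme⟩ := exists_mem_Ioo_of_notMem_Kset
    ⟨(h₂.phiFun_nonneg d).trans hm.1.le, hm.2.le.trans (h₂.phiFun_add_le_one hd)⟩ hmK
  obtain ⟨hl, hr⟩ := eq_and_eq_of_mem_Ioo_of_endpoints_notMem hme hm
    (notMem_Ioo_of_mem_Kset (hK ▸ h₁.phiFun_mem_Kset he) hd)
    (notMem_Ioo_of_mem_Kset (hK ▸ h₁.phiFun_add_mem_Kset he) hd)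
    (notMem_Ioo_of_mem_Kset (hK.symm ▸ h₂.phiFun_mem_Kset hd) he)
    (notMem_Ioo_of_mem_Kset (hK.symm ▸ h₂.phiFun_add_mem_Kset hd) he)
  exact ⟨e, he, hl, by linarith⟩

theorem strictMonoOn_of_phiFun_comp_eq (h₁ : IsGapFun φ₁) (h₂ : IsGapFun φ₂)
    (hfΦ : ∀ d ∈ dyadics, PhiFun φ₁ (f d) = PhiFun φ₂ d) : StrictMonoOn f dyadics :=
  fun d hd e he hde => h₁.phiFun_mono.reflect_lt <| by
    rw [hfΦ d hd, hfΦ e he]; exact h₂.strictMonoOn_phiFun hd he hde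

theorem invOn_of_phiFun_comp_eq (h₁ : IsGapFun φ₁) (h₂ : IsGapFun φ₂)
    (hfD : MapsTo f dyadics dyadics) (hf'D : MapsTo f' dyadics dyadics)
    (hfΦ : ∀ d ∈ dyadics, PhiFun φ₁ (f d) = PhiFun φ₂ d)
    (hf'Φ : ∀ d ∈ dyadics, PhiFun φ₂ (f' d) = PhiFun φ₁ d) : InvOn f' f dyadics dyadics :=
  ⟨fun d hd => h₂.strictMonoOn_phiFun.injOn (hf'D (hfD hd)) hd <| by
      rw [hf'Φ _ (hfD hd), hfΦ d hd],
    fun d hd => h₁.strictMonoOn_phiFun.injOn (hfD (hf'D hd)) hd <| by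
      rw [hfΦ _ (hf'D hd), hf'Φ d hd]⟩

end Matching

section Extension

noncomputable def dyadicExtend (f : ℝ → ℝ) (x : ℝ) : ℝ :=
  sSup (insert 0 (f '' (dyadics ∩ Iic x)))

variable {f f' : ℝ → ℝ} {d x : ℝ}

theorem dyadicExtend_set_subset_Icc (hfD : MapsTo f dyadics dyadics) (x : ℝ) :
    insert 0 (f '' (dyadics ∩ Iic x)) ⊆ Icc 0 1 :=
  insert_subset (left_mem_Icc.2 zero_le_one) <| image_subset_iff.2 fun _ hd =>
    Ioo_subset_Icc_self (dyadics_subset_Ioo (hfD hd.1))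

theorem dyadicExtend_mem_Icc (hfD : MapsTo f dyadics dyadics) (x : ℝ) :
    dyadicExtend f x ∈ Icc 0 1 :=
  ⟨le_csSup (bddAbove_Icc.mono (dyadicExtend_set_subset_Icc hfD x)) (mem_insert _ _),
    csSup_le (insert_nonempty _ _) fun _ hy => (dyadicExtend_set_subset_Icc hfD x hy).2⟩

theorem le_dyadicExtend (hfD : MapsTo f dyadics dyadics) (hd : d ∈ dyadics) (hdx : d ≤ x) :
    f d ≤ dyadicExtend f x :=
  le_csSup (bddAbove_Icc.mono (dyadicExtend_set_subset_Icc hfD x))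
    (mem_insert_of_mem _ ⟨d, ⟨hd, hdx⟩, rfl⟩)

theorem dyadicExtend_le (hfD : MapsTo f dyadics dyadics) (hf : MonotoneOn f dyadics)
    (hd : d ∈ dyadics) (hxd : x ≤ d) : dyadicExtend f x ≤ f d := by
  refine csSup_le (insert_nonempty _ _) ?_
  rintro _ (rfl | ⟨c, ⟨hc, hcx⟩, rfl⟩)
  · exact (dyadics_subset_Ioo (hfD hd)).1.le
  · exact hf hc hd (hcx.trans hxd)

theorem dyadicExtend_of_mem (hfD : MapsTo f dyadics dyadics) (hf : MonotoneOn f dyadics)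
    (hd : d ∈ dyadics) : dyadicExtend f d = f d :=
  le_antisymm (dyadicExtend_le hfD hf hd le_rfl) (le_dyadicExtend hfD hd le_rfl)

theorem strictMonoOn_dyadicExtend (hfD : MapsTo f dyadics dyadics)
    (hf : StrictMonoOn f dyadics) : StrictMonoOn (dyadicExtend f) (Icc 0 1) := by
  intro x hx y hy hxy
  obtain ⟨d, hd, hxd, hdy⟩ := exists_dyadic_mem_Ioo hx.1 hy.2 hxy
  obtain ⟨e, he, hde, hey⟩ := exists_dyadic_mem_Ioo (dyadics_subset_Ioo hd).1.le hy.2 hdy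
  calc dyadicExtend f x ≤ f d := dyadicExtend_le hfD hf.monotoneOn hd hxd.le
    _ < f e := hf hd he hde
    _ ≤ dyadicExtend f y := le_dyadicExtend hfD he hey.le

theorem dyadicExtend_dyadicExtend (hfD : MapsTo f dyadics dyadics)
    (hf'D : MapsTo f' dyadics dyadics) (hf' : StrictMonoOn f' dyadics)
    (hinv : InvOn f f' dyadics dyadics) {t : ℝ}
    (ht : t ∈ Icc (0 : ℝ) 1) : dyadicExtend f (dyadicExtend f' t) = t := by
  refine le_antisymm (csSup_le (insert_nonempty _ _) ?_) (le_of_forall_lt fun s hst => ?_)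
  · rintro _ (rfl | ⟨d, ⟨hd, hdt⟩, rfl⟩)
    · exact ht.1
    · by_contra! htd
      obtain ⟨e, he, hte, hed⟩ :=
        exists_dyadic_mem_Ioo ht.1 (dyadics_subset_Ioo (hfD hd)).2.le htd
      have hlt := hf' he (hfD hd) hed
      rw [hinv.2 hd] at hlt
      exact (hdt.trans (dyadicExtend_le hf'D hf'.monotoneOn he hte.le)).not_gt hlt
  · rcases lt_or_ge s 0 with hs | hs
    · exact hs.trans_le (dyadicExtend_mem_Icc hfD _).1
    · obtain ⟨e, he, hse, het⟩ := exists_dyadic_mem_Ioo hs ht.2 hst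
      have hle := le_dyadicExtend hfD (hf'D he) (le_dyadicExtend hf'D he het.le)
      rw [hinv.1 he] at hle
      exact hse.trans_le hle

theorem exists_continuousOn_bijOn_Icc_eqOn_dyadics (hfD : MapsTo f dyadics dyadics)
    (hf'D : MapsTo f' dyadics dyadics) (hf : StrictMonoOn f dyadics)
    (hf' : StrictMonoOn f' dyadics) (hinv : InvOn f f' dyadics dyadics) :
    ∃ g : ℝ → ℝ, ContinuousOn g (Icc 0 1) ∧ BijOn g (Icc 0 1) (Icc 0 1) ∧
      EqOn g f dyadics := by
  have hmaps : MapsTo (dyadicExtend f) (Icc 0 1) (Icc 0 1) :=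
    fun x _ => dyadicExtend_mem_Icc hfD x
  have hsurj : SurjOn (dyadicExtend f) (Icc 0 1) (Icc 0 1) := fun t ht =>
    ⟨_, dyadicExtend_mem_Icc hf'D t, dyadicExtend_dyadicExtend hfD hf'D hf' hinv ht⟩
  have hmono := strictMonoOn_dyadicExtend hfD hf
  exact ⟨_, hmono.monotoneOn.continuousOn_of_surjOn_Icc hmaps hsurj,
    ⟨hmaps, hmono.injOn, hsurj⟩, fun _ hd => dyadicExtend_of_mem hfD hf.monotoneOn hd⟩

end Extension

/-- If `φ₁, φ₂ ∈ 𝒢` satisfy `K_{φ₁} = K_{φ₂}`, then there is a homeomorphism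
`g` of `[0,1]` onto itself (a continuous bijection of the compact set `[0,1]` onto itself,
hence a homeomorphism) mapping `D` onto `D` with `φ₂ = φ₁ ∘ g` on `D`. -/
theorem stmt_2 (φ₁ φ₂ : ℝ → ℝ) (h₁ : IsGapFun φ₁) (h₂ : IsGapFun φ₂)
    (hK : Kset φ₁ = Kset φ₂) :
    ∃ g : ℝ → ℝ, ContinuousOn g (Set.Icc 0 1) ∧
      Set.BijOn g (Set.Icc 0 1) (Set.Icc 0 1) ∧
      g '' dyadics = dyadics ∧
      ∀ d ∈ dyadics, φ₂ d = φ₁ (g d) := by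
  choose! f hfD hfΦ hfφ using fun d (hd : d ∈ dyadics) => exists_gap_eq_of_Kset_eq h₁ h₂ hK hd
  choose! f' hf'D hf'Φ _ using
    fun d (hd : d ∈ dyadics) => exists_gap_eq_of_Kset_eq h₂ h₁ hK.symm hd
  have hinv : InvOn f' f dyadics dyadics := invOn_of_phiFun_comp_eq h₁ h₂ hfD hf'D hfΦ hf'Φ
  obtain ⟨g, hcont, hbij, hgf⟩ := exists_continuousOn_bijOn_Icc_eqOn_dyadics hfD hf'D
    (strictMonoOn_of_phiFun_comp_eq h₁ h₂ hfΦ) (strictMonoOn_of_phiFun_comp_eq h₂ h₁ hf'Φ)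
    hinv.symm
  refine ⟨g, hcont, hbij, ?_, fun d hd => by rw [hgf hd, hfφ d hd]⟩
  rw [hgf.image_eq, (hinv.bijOn hfD hf'D).image_eq]
end

section
/- For every α ∈ 𝒟𝒮, the set K_α is ℋ-visible: there exists h ∈ ℋ with 0 < μ^h(K_α) < ∞. -/
open Set Filter Topology TopologicalSpace ENNReal MeasureTheory

/-- `α ∈ 𝒟𝒮`: a decreasing sequence of positive reals (indexed from 1) summing to 1. -/
def IsGapSeq (α : ℕ → ℝ) : Prop :=
  (∀ i, 1 ≤ i → 0 < α i) ∧ (∀ i j, 1 ≤ i → i ≤ j → α j ≤ α i) ∧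
    HasSum (fun i : ℕ => α (i + 1)) 1

/-- `φ` is the gap function associated to the gap sequence `α`:
`φ((2s+1)/2^j) = α(2^(j-1) + s)` for `j ≥ 1`, `0 ≤ s < 2^(j-1)`. -/
def IsGapFunOf (α : ℕ → ℝ) (φ : ℝ → ℝ) : Prop :=
  ∀ j s : ℕ, 1 ≤ j → s < 2 ^ (j - 1) →
    φ ((2 * (s : ℝ) + 1) / 2 ^ j) = α (2 ^ (j - 1) + s)

/-- The generalized Hausdorff measure `μ^h` on `ℝ` with gauge `h`. -/
noncomputable def hausdorffGaugeMeasure (h : ℝ → ℝ) : Measure ℝ :=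
  Measure.mkMetric (fun d : ℝ≥0∞ => ENNReal.ofReal (h d.toReal))

/-!
Enumerate the dyadics level by level, so that the gap of `K` at the `n`-th dyadic has length
`α n`, and let `R j = ∑_{n ≥ 2 ^ j} α n`. The dyadics of level below `j` cut `K` into `2 ^ j`
closed cells of total length at most `R j`. The gauge is the concave piecewise linear function
`h` with `h (R j / 2 ^ j) = 2⁻ʲ`, so by concavity the cells of level `j` have `∑ h (length) ≤ 1`,
which bounds `μ^h K` from above.

For the lower bound, the Cantor function of `K` is the distribution function of a probability
measure on `K`. Since `α` decreases, two adjacent cells of level `j` together with the gap between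
them have length at least `R j / 2 ^ j`. Hence on a set of smaller diameter the Cantor function
rises by at most `4 · 2⁻ʲ ≤ 8 h (diameter)`, and the mass distribution principle applies.
-/

lemma ConcaveOn.ciInf {ι E : Type*} [Nonempty ι] [AddCommMonoid E] [Module ℝ E] {s : Set E}
    {f : ι → E → ℝ} (hf : ∀ i, ConcaveOn ℝ s (f i))
    (hbdd : ∀ x ∈ s, BddBelow (range fun i => f i x)) : ConcaveOn ℝ s fun x => ⨅ i, f i x := by
  refine ⟨(hf (Classical.arbitrary ι)).1, fun x hx y hy a b ha hb hab => le_ciInf fun i => ?_⟩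
  refine ((hf i).2 hx hy ha hb hab).trans' (add_le_add ?_ ?_)
  · exact smul_le_smul_of_nonneg_left (ciInf_le (hbdd x hx) i) ha
  · exact smul_le_smul_of_nonneg_left (ciInf_le (hbdd y hy) i) hb

lemma exists_mem_Icc_or_mem_Ioo_of_mem_Icc (a b : ℕ → ℝ) {N : ℕ} {x : ℝ}
    (hx : x ∈ Icc (a 0) (b N)) :
    (∃ s ≤ N, x ∈ Icc (a s) (b s)) ∨ ∃ s < N, x ∈ Ioo (b s) (a (s + 1)) := by
  induction N with
  | zero => exact Or.inl ⟨0, le_rfl, hx⟩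
  | succ N ih =>
    by_cases hxN : x ≤ b N
    · rcases ih ⟨hx.1, hxN⟩ with ⟨s, hs, h⟩ | ⟨s, hs, h⟩
      · exact Or.inl ⟨s, hs.trans N.le_succ, h⟩
      · exact Or.inr ⟨s, hs.trans N.lt_succ_self, h⟩
    · rcases lt_or_ge x (a (N + 1)) with hxa | hxa
      · exact Or.inr ⟨N, N.lt_succ_self, not_le.1 hxN, hxa⟩
      · exact Or.inl ⟨N + 1, le_rfl, hxa, hx.2⟩

namespace CantorGap

variable {α : ℕ → ℝ}

/-- The enumeration of `dyadics` used by `IsGapFunOf`: level by level, from left to right. -/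
noncomputable def dyadicEnum (n : ℕ) : ℝ :=
  (2 * ((n - 2 ^ Nat.log 2 n : ℕ) : ℝ) + 1) / 2 ^ (Nat.log 2 n + 1)

lemma exists_eq_two_pow_add {n : ℕ} (hn : 1 ≤ n) : ∃ j s : ℕ, s < 2 ^ j ∧ n = 2 ^ j + s := by
  have h₁ := Nat.pow_log_le_self 2 (by omega : n ≠ 0)
  have h₂ := Nat.lt_pow_succ_log_self (by norm_num : 1 < 2) n
  rw [pow_succ] at h₂
  exact ⟨Nat.log 2 n, n - 2 ^ Nat.log 2 n, by omega, by omega⟩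

lemma dyadicEnum_two_pow_add {j s : ℕ} (hs : s < 2 ^ j) :
    dyadicEnum (2 ^ j + s) = (2 * s + 1) / 2 ^ (j + 1) := by
  have hlog : Nat.log 2 (2 ^ j + s) = j :=
    Nat.log_eq_of_pow_le_of_lt_pow (Nat.le_add_right _ _) (by rw [pow_succ]; omega)
  simp [dyadicEnum, hlog]

lemma _root_.IsGapFunOf.apply_dyadicEnum {φ : ℝ → ℝ} (hφα : IsGapFunOf α φ)
    {n : ℕ} (hn : 1 ≤ n) : φ (dyadicEnum n) = α n := by
  obtain ⟨j, s, hs, rfl⟩ := exists_eq_two_pow_add hn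
  simpa [dyadicEnum_two_pow_add hs] using hφα (j + 1) s (by omega) (by simpa using hs)

lemma exists_dyadicEnum_eq_div {i k : ℕ} (hi : 0 < i) (hik : i < 2 ^ k) :
    ∃ n, 1 ≤ n ∧ n < 2 ^ k ∧ dyadicEnum n = i / 2 ^ k := by
  induction k generalizing i with
  | zero => omega
  | succ k ih =>
    rw [pow_succ] at hik
    rcases Nat.even_or_odd' i with ⟨i', rfl | rfl⟩
    · obtain ⟨n, hn, hnk, he⟩ := ih (by omega) (by omega : i' < 2 ^ k)
      refine ⟨n, hn, by rw [pow_succ]; omega, ?_⟩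
      rw [he, pow_succ]
      push_cast
      field_simp
    · refine ⟨2 ^ k + i', by omega, by rw [pow_succ]; omega, ?_⟩
      rw [dyadicEnum_two_pow_add (by omega)]
      push_cast
      ring

lemma dyadicEnum_mem_dyadics {n : ℕ} (hn : 1 ≤ n) : dyadicEnum n ∈ dyadics := by
  obtain ⟨j, s, hs, rfl⟩ := exists_eq_two_pow_add hn
  refine ⟨2 * s + 1, j + 1, by omega, by omega, by rw [pow_succ]; omega, ?_⟩
  rw [dyadicEnum_two_pow_add hs]
  push_cast
  ring

lemma dyadics_subset_Ioo : dyadics ⊆ Ioo 0 1 := by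
  rintro _ ⟨i, k, hi, -, hik, rfl⟩
  have : (i : ℝ) < 2 ^ k := by exact_mod_cast hik
  exact ⟨by positivity, (div_lt_one (by positivity)).2 this⟩

lemma dyadicEnum_mem_Ioo {n : ℕ} (hn : 1 ≤ n) : dyadicEnum n ∈ Ioo 0 1 :=
  dyadics_subset_Ioo (dyadicEnum_mem_dyadics hn)

lemma exists_dyadicEnum_eq_div_of_lt {n j : ℕ} (hn : 1 ≤ n) (hnj : n < 2 ^ j) :
    ∃ q : ℕ, dyadicEnum n = q / 2 ^ j := by
  obtain ⟨k, r, hr, rfl⟩ := exists_eq_two_pow_add hn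
  have hkj : k + 1 ≤ j := (Nat.pow_lt_pow_iff_right (by norm_num : 1 < 2)).1 (by omega)
  obtain ⟨d, rfl⟩ : ∃ d, j = k + 1 + d := ⟨j - (k + 1), by omega⟩
  refine ⟨(2 * r + 1) * 2 ^ d, ?_⟩
  rw [dyadicEnum_two_pow_add hr, pow_add]
  push_cast
  field_simp
  ring

lemma dyadicEnum_injOn : InjOn dyadicEnum (Ici 1) := by
  intro m hm n hn h
  wlog hmn : m ≤ n generalizing m n
  · exact (this hn hm h.symm (by omega)).symm
  obtain ⟨j, s, hs, rfl⟩ := exists_eq_two_pow_add hm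
  obtain ⟨k, r, hr, rfl⟩ := exists_eq_two_pow_add hn
  have hjk : j ≤ k := Nat.lt_succ_iff.1 <|
    (Nat.pow_lt_pow_iff_right (by norm_num : 1 < 2)).1 (by rw [pow_succ]; omega)
  rcases hjk.lt_or_eq with hjk | rfl
  · obtain ⟨q, hq⟩ := exists_dyadicEnum_eq_div_of_lt hm
      ((Nat.pow_le_pow_right two_pos hjk).trans_lt' (by rw [pow_succ]; omega))
    rw [hq, dyadicEnum_two_pow_add hr, pow_succ,
      div_eq_div_iff (by positivity) (by positivity)] at h
    have : (2 * q : ℝ) = 2 * r + 1 :=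
      mul_right_cancel₀ (pow_ne_zero k two_ne_zero) (by linear_combination h)
    have : 2 * q = 2 * r + 1 := by exact_mod_cast this
    omega
  · rw [dyadicEnum_two_pow_add hs, dyadicEnum_two_pow_add hr, div_left_inj' (by positivity)] at h
    have : s = r := by exact_mod_cast (by linarith : (s : ℝ) = r)
    rw [this]

lemma dyadicEnum_surjOn : SurjOn dyadicEnum (Ici 1) dyadics := by
  rintro _ ⟨i, k, hi, -, hik, rfl⟩
  obtain ⟨n, hn, -, he⟩ := exists_dyadicEnum_eq_div hi hik
  exact ⟨n, hn, he⟩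

lemma exists_mem_dyadics_mem_Ioo {a b : ℝ} (ha : 0 ≤ a) (hab : a < b) (hb : b ≤ 1) :
    ∃ d ∈ dyadics, d ∈ Ioo a b := by
  obtain ⟨j, hj⟩ := pow_unbounded_of_one_lt (1 / (b - a)) (by norm_num : (1 : ℝ) < 2)
  have hp : (0 : ℝ) < 2 ^ j := by positivity
  rw [div_lt_iff₀ (by linarith), ← sub_pos] at hj
  set k := ⌊a * 2 ^ j⌋₊ + 1
  have hk₁ : a * 2 ^ j < k := by simpa [k] using Nat.lt_floor_add_one (a * 2 ^ j)
  have hk₂ : (k : ℝ) ≤ a * 2 ^ j + 1 := by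
    simpa [k] using Nat.floor_le (by positivity : 0 ≤ a * 2 ^ j)
  have hkb : (k : ℝ) < b * 2 ^ j := by nlinarith
  have hk : k < 2 ^ j := by exact_mod_cast hkb.trans_le (by nlinarith : b * 2 ^ j ≤ (2 : ℝ) ^ j)
  refine ⟨k / 2 ^ j, ⟨k, j, by omega, Nat.pos_of_ne_zero ?_, hk, rfl⟩, ?_, ?_⟩
  · rintro rfl
    omega
  · rwa [lt_div_iff₀ hp]
  · rwa [div_lt_iff₀ hp]

/-- `IsGapSeq α` says nothing about `α 0`, so index `0` is discarded. -/
noncomputable def mass (α : ℕ → ℝ) (A : Set ℕ) : ℝ := ∑' n, A.indicator ((Ici 1).indicator α) n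

lemma mass_eq_tsum_subtype {A : Set ℕ} (hA : A ⊆ Ici 1) : mass α A = ∑' n : A, α n := by
  rw [mass, ← tsum_subtype]
  exact tsum_congr fun n => indicator_of_mem (hA n.2) α

lemma mass_finset {F : Finset ℕ} (hF : ∀ n ∈ F, 1 ≤ n) : mass α F = ∑ n ∈ F, α n := by
  rw [mass, tsum_eq_sum (s := F) fun n hn => indicator_of_notMem (by simpa using hn) _]
  exact Finset.sum_congr rfl fun n hn => by
    simp [indicator_of_mem (show n ∈ (F : Set ℕ) from hn), hF n hn]

lemma mass_singleton {n : ℕ} (hn : 1 ≤ n) : mass α {n} = α n := by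
  simpa using mass_finset (α := α) (F := {n}) (by simpa using hn)

section Mass

variable (hα : IsGapSeq α)
include hα

lemma indicator_Ici_one_nonneg (n : ℕ) : 0 ≤ (Ici 1).indicator α n :=
  indicator_nonneg (fun m hm => (hα.1 m hm).le) n

lemma summable_indicator_Ici_one : Summable ((Ici 1).indicator α) := by
  rw [← summable_nat_add_iff 1]
  simpa using hα.2.2.summable

lemma mass_nonneg (A : Set ℕ) : 0 ≤ mass α A :=
  tsum_nonneg fun n => indicator_nonneg (fun m _ => indicator_Ici_one_nonneg hα m) n

lemma mass_mono {A B : Set ℕ} (h : A ⊆ B) : mass α A ≤ mass α B :=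
  ((summable_indicator_Ici_one hα).indicator A).tsum_le_tsum
    (indicator_le_indicator_of_subset h (indicator_Ici_one_nonneg hα))
    ((summable_indicator_Ici_one hα).indicator B)

lemma mass_union {A B : Set ℕ} (h : Disjoint A B) : mass α (A ∪ B) = mass α A + mass α B := by
  rw [mass, indicator_union_of_disjoint h]
  exact ((summable_indicator_Ici_one hα).indicator A).tsum_add
    ((summable_indicator_Ici_one hα).indicator B)

lemma mass_biUnion_finset {ι : Type*} (s : Finset ι) {A : ι → Set ℕ}
    (h : (s : Set ι).PairwiseDisjoint A) : mass α (⋃ i ∈ s, A i) = ∑ i ∈ s, mass α (A i) := by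
  classical
  rw [mass, Finset.indicator_biUnion s _ h]
  exact Summable.tsum_finsetSum fun i _ => (summable_indicator_Ici_one hα).indicator (A i)

lemma mass_Ici_one : mass α (Ici 1) = 1 := by
  rw [mass, indicator_indicator, inter_self,
    (summable_indicator_Ici_one hα).tsum_eq_zero_add]
  simpa using hα.2.2.tsum_eq

end Mass

noncomputable def tail (α : ℕ → ℝ) (j : ℕ) : ℝ := mass α (Ici (2 ^ j))

noncomputable def blockSum (α : ℕ → ℝ) (j : ℕ) : ℝ := ∑ i ∈ Finset.Ico (2 ^ j) (2 ^ (j + 1)), α i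

/-- The gauge will take the value `2⁻ʲ` at `knot α j`. -/
noncomputable def knot (α : ℕ → ℝ) (j : ℕ) : ℝ := tail α j / 2 ^ j

/-- The slope of the gauge on `[knot α (j + 1), knot α j]`. -/
noncomputable def slope (α : ℕ → ℝ) (j : ℕ) : ℝ := (2 * tail α j - tail α (j + 1))⁻¹

/-- A lower bound for the mass of every cell of level `j`. -/
noncomputable def cellBound (α : ℕ → ℝ) (j : ℕ) : ℝ := ∑' t : ℕ, 2 ^ t * α (2 ^ (j + t + 1))

lemma card_Ico_two_pow (j : ℕ) : (Finset.Ico (2 ^ j) (2 ^ (j + 1))).card = 2 ^ j := by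
  rw [Nat.card_Ico, pow_succ]
  omega

section Tail

variable (hα : IsGapSeq α)
include hα

lemma tail_eq_blockSum_add (j : ℕ) : tail α j = blockSum α j + tail α (j + 1) := by
  have hpow : 2 ^ j ≤ 2 ^ (j + 1) := Nat.pow_le_pow_right two_pos j.le_succ
  have hdisj : Disjoint (Ico (2 ^ j) (2 ^ (j + 1))) (Ici (2 ^ (j + 1))) :=
    disjoint_left.2 fun _ h₁ h₂ => not_le.2 h₁.2 h₂
  rw [tail, ← Ico_union_Ici_eq_Ici hpow, mass_union hα hdisj, blockSum, ← Finset.coe_Ico,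
    mass_finset fun n hn => Nat.one_le_two_pow.trans (Finset.mem_Ico.1 hn).1]
  rfl

lemma blockSum_le (j : ℕ) : blockSum α j ≤ 2 ^ j * α (2 ^ j) := by
  calc blockSum α j ≤ ∑ _i ∈ Finset.Ico (2 ^ j) (2 ^ (j + 1)), α (2 ^ j) :=
        Finset.sum_le_sum fun i hi => hα.2.1 _ _ Nat.one_le_two_pow (Finset.mem_Ico.1 hi).1
    _ = 2 ^ j * α (2 ^ j) := by
        rw [Finset.sum_const, card_Ico_two_pow, nsmul_eq_mul]
        push_cast
        rfl

lemma le_blockSum (j : ℕ) : 2 ^ j * α (2 ^ (j + 1)) ≤ blockSum α j := by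
  calc (2 : ℝ) ^ j * α (2 ^ (j + 1))
        = ∑ _i ∈ Finset.Ico (2 ^ j) (2 ^ (j + 1)), α (2 ^ (j + 1)) := by
        rw [Finset.sum_const, card_Ico_two_pow, nsmul_eq_mul]
        push_cast
        rfl
    _ ≤ blockSum α j := Finset.sum_le_sum fun i hi =>
        hα.2.1 _ _ (Nat.one_le_two_pow.trans (Finset.mem_Ico.1 hi).1) (Finset.mem_Ico.1 hi).2.le

lemma tail_pos (j : ℕ) : 0 < tail α j := by
  refine (hα.1 (2 ^ j) Nat.one_le_two_pow).trans_le ?_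
  rw [← mass_singleton (α := α) (Nat.one_le_two_pow : 1 ≤ 2 ^ j)]
  exact mass_mono hα (singleton_subset_iff.2 (mem_Ici.2 le_rfl))

lemma tail_antitone : Antitone (tail α) :=
  fun _ _ h => mass_mono hα (Ici_subset_Ici.2 (Nat.pow_le_pow_right two_pos h))

lemma tendsto_tail : Tendsto (tail α) atTop (𝓝 0) := by
  have htail (N : ℕ) : mass α (Ici N) = ∑' k, (Ici 1).indicator α (k + N) := by
    rw [mass, ← ((summable_indicator_Ici_one hα).indicator _).sum_add_tsum_nat_add N,
      Finset.sum_eq_zero fun i hi => indicator_of_notMem (by simpa using hi) _, zero_add]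
    exact tsum_congr fun k => indicator_of_mem (by simp) _
  rw [show tail α = fun j => ∑' k, (Ici 1).indicator α (k + 2 ^ j) from funext fun j => htail _]
  exact (_root_.tendsto_sum_nat_add _).comp
    (tendsto_pow_atTop_atTop_of_one_lt (by norm_num : 1 < 2))

lemma hasSum_blockSum (j : ℕ) : HasSum (fun t => blockSum α (j + t)) (tail α j) := by
  have hpartial (T : ℕ) : ∑ t ∈ Finset.range T, blockSum α (j + t) = tail α j - tail α (j + T) := by
    induction T with
    | zero => simp
    | succ T ih =>
      rw [Finset.sum_range_succ, ih, ← add_assoc, tail_eq_blockSum_add hα (j + T)]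
      ring
  have hnonneg (t : ℕ) : 0 ≤ blockSum α (j + t) :=
    (le_blockSum hα _).trans' (mul_nonneg (by positivity) (hα.1 _ Nat.one_le_two_pow).le)
  rw [hasSum_iff_tendsto_nat_of_nonneg hnonneg, funext hpartial]
  simpa using tendsto_const_nhds.sub
    ((tendsto_tail hα).comp (tendsto_atTop_atTop.2 fun b => ⟨b, fun T hT => by omega⟩))

lemma knot_pos (j : ℕ) : 0 < knot α j := div_pos (tail_pos hα j) (by positivity)

lemma two_mul_tail_sub_pos (j : ℕ) : 0 < 2 * tail α j - tail α (j + 1) := by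
  linarith [tail_antitone hα j.le_succ, tail_pos hα j]

lemma slope_pos (j : ℕ) : 0 < slope α j := inv_pos.2 (two_mul_tail_sub_pos hα j)

/-- The slopes increase because blocks at most double in mass from one level to the next. -/
lemma slope_monotone : Monotone (slope α) := by
  refine monotone_nat_of_le_succ fun j => inv_anti₀ (two_mul_tail_sub_pos hα (j + 1)) ?_
  have h₁ := le_blockSum hα j
  have h₂ := blockSum_le hα (j + 1)
  rw [pow_succ] at h₂
  linarith [tail_eq_blockSum_add hα j, tail_eq_blockSum_add hα (j + 1)]

lemma slope_mul_knot_sub_knot (j : ℕ) :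
    slope α j * (knot α j - knot α (j + 1)) = (2 ^ (j + 1) : ℝ)⁻¹ := by
  have := two_mul_tail_sub_pos hα j
  rw [slope, knot, knot, pow_succ]
  field_simp

lemma slope_mul_knot_le (j : ℕ) : slope α j * knot α j ≤ (2 ^ j : ℝ)⁻¹ := by
  rw [slope, knot, inv_mul_le_iff₀ (two_mul_tail_sub_pos hα j), inv_eq_one_div, mul_one_div]
  gcongr
  linarith [tail_antitone hα j.le_succ]

lemma knot_antitone : Antitone (knot α) := by
  refine antitone_nat_of_succ_le fun j => sub_nonneg.1 ?_
  have h := slope_mul_knot_sub_knot hα j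
  exact nonneg_of_mul_nonneg_right (h ▸ by positivity) (slope_pos hα j)

lemma knot_le_add_cellBound (j : ℕ) : knot α j ≤ α (2 ^ j) + 2 * cellBound α j := by
  have hpow (t : ℕ) : (2 : ℝ) ^ (j + t + 1) = 2 ^ (j + 1) * 2 ^ t := by ring
  have hsum : Summable fun t : ℕ => (2 : ℝ) ^ t * α (2 ^ (j + t + 1)) := by
    refine Summable.of_nonneg_of_le (fun t => mul_nonneg (by positivity)
      (hα.1 _ Nat.one_le_two_pow).le) (fun t => ?_)
      ((hasSum_blockSum hα j).summable.div_const (2 ^ j))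
    rw [le_div_iff₀ (by positivity), mul_right_comm, ← pow_add, add_comm t]
    exact le_blockSum hα (j + t)
  have hblock (t : ℕ) : blockSum α (j + (t + 1)) ≤ 2 ^ (j + 1) * (2 ^ t * α (2 ^ (j + t + 1))) := by
    rw [← mul_assoc, ← hpow, ← add_assoc]
    exact blockSum_le hα _
  have htail : tail α j ≤ 2 ^ j * α (2 ^ j) + 2 ^ (j + 1) * cellBound α j := by
    rw [← (hasSum_blockSum hα j).tsum_eq, (hasSum_blockSum hα j).summable.tsum_eq_zero_add,
      cellBound, ← tsum_mul_left]
    exact add_le_add (blockSum_le hα j) (Summable.tsum_le_tsum hblock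
      ((hasSum_blockSum hα j).summable.comp_injective (add_left_injective 1)) (hsum.mul_left _))
  rw [knot, div_le_iff₀ (by positivity)]
  exact htail.trans_eq (by ring)

end Tail

noncomputable def line (α : ℕ → ℝ) (j : ℕ) (x : ℝ) : ℝ := (2 ^ j)⁻¹ + slope α j * (x - knot α j)

/-- The concave piecewise linear interpolation of the points `(knot α j, 2⁻ʲ)`, capped at `1`. -/
noncomputable def gauge (α : ℕ → ℝ) (x : ℝ) : ℝ := min 1 (⨅ j, line α j x)

lemma continuous_line (j : ℕ) : Continuous (line α j) := by
  unfold line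
  fun_prop

section Gauge

variable (hα : IsGapSeq α)
include hα

lemma line_eq_of_knot_succ (j : ℕ) (x : ℝ) :
    line α j x = (2 ^ (j + 1))⁻¹ + slope α j * (x - knot α (j + 1)) := by
  have h := slope_mul_knot_sub_knot hα j
  rw [pow_succ, mul_inv] at h ⊢
  rw [line]
  linear_combination (-1 : ℝ) * h

lemma line_monotone (j : ℕ) : Monotone (line α j) := fun _ _ hxy => by
  unfold line
  nlinarith [slope_pos hα j]

lemma line_zero_le (j : ℕ) : line α j 0 ≤ (2 ^ j)⁻¹ := by
  have := mul_pos (slope_pos hα j) (knot_pos hα j)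
  rw [line]
  linarith

lemma line_nonneg (j : ℕ) {x : ℝ} (hx : 0 ≤ x) : 0 ≤ line α j x := by
  have := slope_mul_knot_le hα j
  exact (line_monotone hα j hx).trans' (by rw [line]; linarith)

lemma bddBelow_range_line {x : ℝ} (hx : 0 ≤ x) : BddBelow (range fun j => line α j x) :=
  ⟨0, forall_mem_range.2 fun j => line_nonneg hα j hx⟩

/-- Every line lies above all the knots; this is what makes the gauge interpolate them. -/
lemma inv_two_pow_le_line_knot (k m : ℕ) : (2 ^ m : ℝ)⁻¹ ≤ line α k (knot α m) := by
  rcases le_total m k with hmk | hkm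
  · induction k, hmk using Nat.le_induction with
    | base => simp [line]
    | succ k hmk ih =>
      have h₁ := slope_monotone hα k.le_succ
      have h₂ := knot_antitone hα (hmk.trans k.le_succ)
      have : line α (k + 1) (knot α m) - line α k (knot α m) =
          (slope α (k + 1) - slope α k) * (knot α m - knot α (k + 1)) := by
        rw [line_eq_of_knot_succ hα k, line]
        ring
      nlinarith
  · induction m, hkm using Nat.le_induction with
    | base => simp [line]
    | succ m hkm ih =>
      have h₁ := slope_monotone hα hkm
      have h₂ := knot_antitone hα m.le_succ
      have h₃ := slope_mul_knot_sub_knot hα m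
      have : (2 ^ m : ℝ)⁻¹ = 2 * (2 ^ (m + 1))⁻¹ := by rw [pow_succ, mul_inv]; ring
      have : line α k (knot α (m + 1)) = line α k (knot α m) -
          slope α k * (knot α m - knot α (m + 1)) := by
        rw [line, line]
        ring
      nlinarith

lemma gauge_le_line (j : ℕ) {x : ℝ} (hx : 0 ≤ x) : gauge α x ≤ line α j x :=
  (min_le_right _ _).trans (ciInf_le (bddBelow_range_line hα hx) j)

lemma gauge_nonneg {x : ℝ} (hx : 0 ≤ x) : 0 ≤ gauge α x :=
  le_min zero_le_one (le_ciInf fun j => line_nonneg hα j hx)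

lemma inv_two_pow_le_gauge {m : ℕ} {x : ℝ} (hx : knot α m ≤ x) : (2 ^ m : ℝ)⁻¹ ≤ gauge α x :=
  le_min (inv_le_one_of_one_le₀ (one_le_pow₀ one_le_two)) (le_ciInf fun k =>
    (inv_two_pow_le_line_knot hα k m).trans (line_monotone hα k hx))

lemma gauge_monotoneOn : MonotoneOn (gauge α) (Ici 0) := fun _ hx _ _ hxy =>
  min_le_min le_rfl (le_ciInf fun j =>
    (ciInf_le (bddBelow_range_line hα hx) j).trans (line_monotone hα j hxy))

lemma gauge_concaveOn : ConcaveOn ℝ (Ici 0) (gauge α) := by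
  refine (concaveOn_const 1 (convex_Ici 0)).inf (ConcaveOn.ciInf (fun j => ?_)
    fun x hx => bddBelow_range_line hα hx)
  refine ⟨convex_Ici 0, fun x _ y _ a b _ _ hab => le_of_eq ?_⟩
  simp only [line, smul_eq_mul]
  linear_combination ((2 ^ j)⁻¹ - slope α j * knot α j) * hab

lemma gauge_zero : gauge α 0 = 0 := by
  refine le_antisymm (ge_of_tendsto' (tendsto_inv_atTop_zero.comp
      (tendsto_pow_atTop_atTop_of_one_lt one_lt_two)) fun j => ?_) (gauge_nonneg hα le_rfl)
  exact (gauge_le_line hα j le_rfl).trans (line_zero_le hα j)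

lemma gauge_continuousOn : ContinuousOn (gauge α) (Ici 0) := by
  refine (gauge_concaveOn hα).continuousOn_Ici ?_
  rw [ContinuousWithinAt, gauge_zero hα, tendsto_order]
  refine ⟨fun a ha => eventually_nhdsWithin_of_forall fun x hx => ha.trans_le
    (gauge_nonneg hα hx), fun a ha => ?_⟩
  obtain ⟨j, hj⟩ := exists_pow_lt_of_lt_one ha one_half_lt_one
  rw [one_div_pow, one_div] at hj
  have hline : ∀ᶠ x in 𝓝 0, line α j x < a :=
    (continuous_line j).continuousAt.eventually_lt continuousAt_const
      ((line_zero_le hα j).trans_lt hj)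
  filter_upwards [self_mem_nhdsWithin, nhdsWithin_le_nhds hline] with x hx hlt
  exact (gauge_le_line hα j hx).trans_lt hlt

end Gauge

def indicesIn (S : Set ℝ) : Set ℕ := Ici 1 ∩ dyadicEnum ⁻¹' S

/-- The purely atomic measure of mass `α n` at `dyadicEnum n`, evaluated on `S`. -/
noncomputable def dyadicMass (α : ℕ → ℝ) (S : Set ℝ) : ℝ := mass α (indicesIn S)

lemma bijOn_dyadicEnum_indicesIn (S : Set ℝ) :
    BijOn dyadicEnum (indicesIn S) (dyadics ∩ S) :=
  ⟨fun n hn => ⟨dyadicEnum_mem_dyadics hn.1, hn.2⟩,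
    dyadicEnum_injOn.mono inter_subset_left,
    fun d hd => by
      obtain ⟨n, hn, rfl⟩ := dyadicEnum_surjOn hd.1
      exact ⟨n, ⟨hn, hd.2⟩, rfl⟩⟩

lemma PhiFun_eq_dyadicMass {φ : ℝ → ℝ} (hφα : IsGapFunOf α φ) (d : ℝ) :
    PhiFun φ d = dyadicMass α (Iio d) := by
  rw [PhiFun, dyadicMass, mass_eq_tsum_subtype (A := indicesIn _) inter_subset_left,
    ← ((bijOn_dyadicEnum_indicesIn _).equiv _).tsum_eq]
  exact tsum_congr fun n => hφα.apply_dyadicEnum n.2.1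

lemma dyadicMass_singleton_dyadicEnum {n : ℕ} (hn : 1 ≤ n) : dyadicMass α {dyadicEnum n} = α n := by
  have : indicesIn {dyadicEnum n} = {n} := by
    ext m
    exact ⟨fun hm => dyadicEnum_injOn hm.1 hn hm.2, by rintro rfl; exact ⟨hn, rfl⟩⟩
  rw [dyadicMass, this, mass_singleton hn]

lemma dyadicMass_Iic_zero : dyadicMass α (Iic 0) = 0 := by
  have : indicesIn (Iic 0) = ∅ :=
    eq_empty_of_forall_notMem fun n hn => not_lt.2 hn.2 (dyadicEnum_mem_Ioo hn.1).1
  simp [dyadicMass, this, mass]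

section DyadicMass

variable (hα : IsGapSeq α)
include hα

lemma dyadicMass_nonneg (S : Set ℝ) : 0 ≤ dyadicMass α S := mass_nonneg hα _

lemma dyadicMass_mono {S T : Set ℝ} (h : S ⊆ T) : dyadicMass α S ≤ dyadicMass α T :=
  mass_mono hα (inter_subset_inter_right _ (preimage_mono h))

lemma dyadicMass_union {S T : Set ℝ} (h : Disjoint S T) :
    dyadicMass α (S ∪ T) = dyadicMass α S + dyadicMass α T := by
  rw [dyadicMass, indicesIn, preimage_union, inter_union_distrib_left,
    mass_union hα ((h.preimage _).mono inter_subset_right inter_subset_right)]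
  rfl

lemma dyadicMass_Iio_one : dyadicMass α (Iio 1) = 1 := by
  have : indicesIn (Iio 1) = Ici 1 :=
    inter_eq_left.2 fun n hn => (dyadicEnum_mem_Ioo hn).2
  rw [dyadicMass, this, mass_Ici_one hα]

lemma dyadicMass_Iic_dyadicEnum {n : ℕ} (hn : 1 ≤ n) :
    dyadicMass α (Iic (dyadicEnum n)) = dyadicMass α (Iio (dyadicEnum n)) + α n := by
  have hdisj : Disjoint (Iio (dyadicEnum n)) {dyadicEnum n} :=
    disjoint_singleton_right.2 (lt_irrefl (dyadicEnum n))
  rw [← Iio_insert, insert_eq, union_comm, dyadicMass_union hα hdisj,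
    dyadicMass_singleton_dyadicEnum hn]

lemma dyadicMass_Iio_lt_Iic {d : ℝ} (hd : d ∈ dyadics) :
    dyadicMass α (Iio d) < dyadicMass α (Iic d) := by
  obtain ⟨n, hn, rfl⟩ := dyadicEnum_surjOn hd
  rw [dyadicMass_Iic_dyadicEnum hα hn]
  linarith [hα.1 n hn]

lemma dyadicMass_Iio_add_le_Iic {i k : ℕ} (hi : 0 < i) (hik : i < 2 ^ k) :
    dyadicMass α (Iio (i / 2 ^ k)) + α (2 ^ k) ≤ dyadicMass α (Iic (i / 2 ^ k)) := by
  obtain ⟨n, hn, hnk, he⟩ := exists_dyadicEnum_eq_div hi hik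
  rw [← he, dyadicMass_Iic_dyadicEnum hα hn]
  linarith [hα.2.1 n _ hn hnk.le]

lemma dyadicMass_Iio_sub_Iic {x y : ℝ} (hxy : x < y) :
    dyadicMass α (Iio y) - dyadicMass α (Iic x) = dyadicMass α (Ioo x y) := by
  have hdisj : Disjoint (Iic x) (Ioo x y) :=
    (Iic_disjoint_Ioi le_rfl).mono_right Ioo_subset_Ioi_self
  rw [← Iic_union_Ioo_eq_Iio hxy, dyadicMass_union hα hdisj]
  ring

lemma Kset_eq {φ : ℝ → ℝ} (hφα : IsGapFunOf α φ) :
    Kset φ = Icc 0 1 \ ⋃ d ∈ dyadics, Ioo (dyadicMass α (Iio d)) (dyadicMass α (Iic d)) := by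
  refine congrArg _ (iUnion₂_congr fun d hd => ?_)
  obtain ⟨n, hn, rfl⟩ := dyadicEnum_surjOn hd
  rw [PhiFun_eq_dyadicMass hφα, hφα.apply_dyadicEnum hn, dyadicMass_Iic_dyadicEnum hα hn]

end DyadicMass

def dyadicIoo (j s : ℕ) : Set ℝ := Ioo (s / 2 ^ j) ((s + 1) / 2 ^ j)

lemma indicesIn_dyadicIoo_subset (j s : ℕ) : indicesIn (dyadicIoo j s) ⊆ Ici (2 ^ j) := by
  intro n hn
  by_contra hnj
  obtain ⟨q, hq⟩ := exists_dyadicEnum_eq_div_of_lt hn.1 (not_le.1 hnj)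
  have h := hn.2
  rw [mem_preimage, hq, dyadicIoo, mem_Ioo, div_lt_div_iff_of_pos_right (by positivity),
    div_lt_div_iff_of_pos_right (by positivity)] at h
  have : s < q := by exact_mod_cast h.1
  have : q < s + 1 := by exact_mod_cast h.2
  omega

/-- The `2 ^ t` indices of level `j + t` whose dyadics lie in the `s`-th cell of level `j`. -/
def cellBlock (j s t : ℕ) : Finset ℕ :=
  Finset.Ico (2 ^ (j + t) + s * 2 ^ t) (2 ^ (j + t) + (s + 1) * 2 ^ t)

lemma cellBlock_subset_Ico {j s t : ℕ} (hs : s < 2 ^ j) :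
    cellBlock j s t ⊆ Finset.Ico (2 ^ (j + t)) (2 ^ (j + t + 1)) := by
  have : (s + 1) * 2 ^ t ≤ 2 ^ (j + t) := by
    rw [pow_add]
    exact Nat.mul_le_mul_right _ hs
  intro n hn
  simp only [cellBlock, Finset.mem_Ico] at hn ⊢
  rw [pow_succ]
  omega

lemma cellBlock_subset_indicesIn {j s t : ℕ} (hs : s < 2 ^ j) :
    (cellBlock j s t : Set ℕ) ⊆ indicesIn (dyadicIoo j s) := by
  intro n hn
  have hn' := Finset.mem_Ico.1 (cellBlock_subset_Ico hs hn)
  obtain ⟨r, rfl⟩ : ∃ r, n = 2 ^ (j + t) + r := ⟨n - 2 ^ (j + t), by omega⟩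
  simp only [cellBlock, Finset.coe_Ico, mem_Ico] at hn
  have hr : r < 2 ^ (j + t) := by rw [pow_succ] at hn'; omega
  have h₁ : s * 2 ^ t * 2 < 2 * r + 1 := by linarith
  have h₂ : 2 * r + 1 < (s + 1) * 2 ^ t * 2 := by linarith
  have hpow : (2 : ℝ) ^ (j + t + 1) = 2 ^ j * (2 ^ t * 2) := by ring
  refine ⟨Nat.one_le_two_pow.trans hn'.1, ?_⟩
  rw [mem_preimage, dyadicEnum_two_pow_add hr, hpow, dyadicIoo, mem_Ioo,
    div_lt_div_iff₀ (by positivity) (by positivity),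
    div_lt_div_iff₀ (by positivity) (by positivity)]
  constructor
  · have : (s : ℝ) * 2 ^ t * 2 < 2 * r + 1 := by exact_mod_cast h₁
    nlinarith [pow_pos (two_pos : (0 : ℝ) < 2) j]
  · have : (2 * r + 1 : ℝ) < (s + 1) * 2 ^ t * 2 := by exact_mod_cast h₂
    nlinarith [pow_pos (two_pos : (0 : ℝ) < 2) j]

section Cells

variable (hα : IsGapSeq α)
include hα

lemma sum_dyadicMass_dyadicIoo_le_tail (j : ℕ) :
    ∑ s ∈ Finset.range (2 ^ j), dyadicMass α (dyadicIoo j s) ≤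
      tail α j := by
  have hdisj := Monotone.pairwise_disjoint_on_Ioo_succ (f := fun s : ℕ => (s / 2 ^ j : ℝ))
    fun a b hab => div_le_div_of_nonneg_right (Nat.cast_le.2 hab) (by positivity)
  simp only [Order.succ_eq_add_one, Nat.cast_add, Nat.cast_one] at hdisj
  have hunion := mass_biUnion_finset hα (Finset.range (2 ^ j))
    (A := fun s : ℕ => indicesIn (dyadicIoo j s))
    fun s _ t _ hst => ((hdisj hst).preimage _).mono inter_subset_right inter_subset_right
  unfold dyadicMass
  rw [← hunion]
  exact mass_mono hα (iUnion₂_subset fun s _ => indicesIn_dyadicIoo_subset j s)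

lemma cellBound_le_dyadicMass {j s : ℕ} (hs : s < 2 ^ j) :
    cellBound α j ≤ dyadicMass α (dyadicIoo j s) := by
  refine Real.tsum_le_of_sum_range_le (fun t => mul_nonneg (by positivity)
    (hα.1 _ Nat.one_le_two_pow).le) fun T => ?_
  have hIco := Monotone.pairwise_disjoint_on_Ico_succ (f := fun t : ℕ => 2 ^ (j + t))
    fun a b hab => Nat.pow_le_pow_right two_pos (by omega)
  simp only [Order.succ_eq_add_one, ← add_assoc] at hIco
  have hdisj : ((Finset.range T : Set ℕ)).PairwiseDisjoint fun t => (cellBlock j s t : Set ℕ) :=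
    fun t₁ _ t₂ _ h => (hIco h).mono (fun n hn => by simpa using cellBlock_subset_Ico hs hn)
      (fun n hn => by simpa using cellBlock_subset_Ico hs hn)
  have hblock (t : ℕ) : 2 ^ t * α (2 ^ (j + t + 1)) ≤ mass α (cellBlock j s t) := by
    have hmem {n : ℕ} (hn : n ∈ cellBlock j s t) := Finset.mem_Ico.1 (cellBlock_subset_Ico hs hn)
    have hcard : (cellBlock j s t).card = 2 ^ t := by
      rw [cellBlock, Nat.card_Ico, Nat.add_sub_add_left, add_mul, one_mul, Nat.add_sub_cancel_left]
    rw [mass_finset fun n hn => Nat.one_le_two_pow.trans (hmem hn).1]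
    calc (2 : ℝ) ^ t * α (2 ^ (j + t + 1)) = (cellBlock j s t).card • α (2 ^ (j + t + 1)) := by
          rw [hcard, nsmul_eq_mul]
          push_cast
          rfl
      _ ≤ _ := Finset.card_nsmul_le_sum _ _ _ fun n hn =>
          hα.2.1 _ _ (Nat.one_le_two_pow.trans (hmem hn).1) (hmem hn).2.le
  calc ∑ t ∈ Finset.range T, 2 ^ t * α (2 ^ (j + t + 1))
      ≤ ∑ t ∈ Finset.range T, mass α (cellBlock j s t) := Finset.sum_le_sum fun t _ => hblock t
    _ = mass α (⋃ t ∈ Finset.range T, (cellBlock j s t : Set ℕ)) :=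
        (mass_biUnion_finset hα _ hdisj).symm
    _ ≤ _ := mass_mono hα (iUnion₂_subset fun t _ => cellBlock_subset_indicesIn hs)

lemma Kset_subset_iUnion_Icc {φ : ℝ → ℝ} (hφα : IsGapFunOf α φ) (j : ℕ) :
    Kset φ ⊆ ⋃ s : Fin (2 ^ j),
      Icc (dyadicMass α (Iic (s / 2 ^ j))) (dyadicMass α (Iio ((s + 1) / 2 ^ j))) := by
  rw [Kset_eq hα hφα]
  rintro x ⟨hx, hgap⟩
  have hN : (((2 ^ j - 1 : ℕ) : ℝ) + 1) / 2 ^ j = 1 := by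
    rw [Nat.cast_sub Nat.one_le_two_pow]
    push_cast
    field_simp
    ring
  have hx' : x ∈ Icc (dyadicMass α (Iic (((0 : ℕ) : ℝ) / 2 ^ j)))
      (dyadicMass α (Iio ((((2 ^ j - 1 : ℕ) : ℝ) + 1) / 2 ^ j))) := by
    rwa [hN, Nat.cast_zero, zero_div, dyadicMass_Iic_zero, dyadicMass_Iio_one hα]
  rcases exists_mem_Icc_or_mem_Ioo_of_mem_Icc (fun s : ℕ => dyadicMass α (Iic (s / 2 ^ j)))
    (fun s : ℕ => dyadicMass α (Iio ((s + 1) / 2 ^ j))) hx' with ⟨s, hs, hmem⟩ | ⟨s, hs, hmem⟩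
  · exact mem_iUnion.2 ⟨⟨s, by have := @Nat.one_le_two_pow j; omega⟩, hmem⟩
  · refine absurd (mem_iUnion₂.2 ⟨((s + 1 : ℕ) : ℝ) / 2 ^ j, ?_, ?_⟩) hgap
    · exact ⟨s + 1, j, by omega, Nat.pos_of_ne_zero (by rintro rfl; simp at hs), by omega, rfl⟩
    · simpa using hmem

end Cells

noncomputable def cantorFun (α : ℕ → ℝ) (x : ℝ) : ℝ :=
  sSup (insert 0 {d | d ∈ dyadics ∧ dyadicMass α (Iic d) ≤ x})

lemma bddAbove_insert_zero_dyadics (x : ℝ) :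
    BddAbove (insert 0 {d | d ∈ dyadics ∧ dyadicMass α (Iic d) ≤ x}) :=
  ⟨1, forall_mem_insert.2 ⟨zero_le_one, fun _ hd => (dyadics_subset_Ioo hd.1).2.le⟩⟩

lemma cantorFun_nonneg (x : ℝ) : 0 ≤ cantorFun α x :=
  le_csSup (bddAbove_insert_zero_dyadics x) (mem_insert _ _)

lemma cantorFun_le_one (x : ℝ) : cantorFun α x ≤ 1 :=
  csSup_le (insert_nonempty _ _) (forall_mem_insert.2
    ⟨zero_le_one, fun _ hd => (dyadics_subset_Ioo hd.1).2.le⟩)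

lemma cantorFun_monotone : Monotone (cantorFun α) := fun _ y hxy =>
  csSup_le_csSup (bddAbove_insert_zero_dyadics y) (insert_nonempty _ _)
    (insert_subset_insert fun _ hd => ⟨hd.1, hd.2.trans hxy⟩)

lemma le_cantorFun {d x : ℝ} (hd : d ∈ dyadics) (h : dyadicMass α (Iic d) ≤ x) :
    d ≤ cantorFun α x :=
  le_csSup (bddAbove_insert_zero_dyadics x) (mem_insert_of_mem _ ⟨hd, h⟩)

lemma cantorFun_le {d x : ℝ} (hd : 0 ≤ d)
    (h : ∀ d' ∈ dyadics, d < d' → x < dyadicMass α (Iic d')) : cantorFun α x ≤ d :=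
  csSup_le (insert_nonempty _ _) (forall_mem_insert.2 ⟨hd, fun d' hd' =>
    not_lt.1 fun hdd' => (h d' hd'.1 hdd').not_ge hd'.2⟩)

lemma le_cantorFun_of_forall {d x : ℝ} (hd : d ≤ 1)
    (h : ∀ d' ∈ dyadics, d' < d → dyadicMass α (Iic d') ≤ x) : d ≤ cantorFun α x := by
  by_contra! hlt
  obtain ⟨d', hd', hmem⟩ := exists_mem_dyadics_mem_Ioo (cantorFun_nonneg x) hlt hd
  exact (le_cantorFun hd' (h d' hd' hmem.2)).not_gt hmem.1

section CantorFun

variable (hα : IsGapSeq α)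
include hα

lemma cantorFun_le_of_lt {d x : ℝ} (hd : 0 ≤ d) (h : x < dyadicMass α (Iic d)) :
    cantorFun α x ≤ d :=
  cantorFun_le hd fun _ _ hdd' => h.trans_le (dyadicMass_mono hα (Iic_subset_Iic.2 hdd'.le))

lemma cantorFun_eq_of_mem_Icc {d x : ℝ} (hd : d ∈ dyadics)
    (hx : x ∈ Icc (dyadicMass α (Iio d)) (dyadicMass α (Iic d))) : cantorFun α x = d := by
  refine le_antisymm (cantorFun_le (dyadics_subset_Ioo hd).1.le fun d' hd' hdd' => ?_)
    (le_cantorFun_of_forall (dyadics_subset_Ioo hd).2.le fun d' _ hd'd => ?_)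
  · exact hx.2.trans_lt ((dyadicMass_mono hα (Iic_subset_Iio.2 hdd')).trans_lt
      (dyadicMass_Iio_lt_Iic hα hd'))
  · exact (dyadicMass_mono hα (Iic_subset_Iio.2 hd'd)).trans hx.1

lemma cantorFun_zero : cantorFun α 0 = 0 :=
  le_antisymm (cantorFun_le le_rfl fun _ hd' _ =>
    (dyadicMass_nonneg hα _).trans_lt (dyadicMass_Iio_lt_Iic hα hd')) (cantorFun_nonneg 0)

lemma cantorFun_one : cantorFun α 1 = 1 :=
  le_antisymm (cantorFun_le_one 1) (le_cantorFun_of_forall le_rfl fun _ _ hd' =>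
    (dyadicMass_mono hα (Iic_subset_Iio.2 hd')).trans_eq (dyadicMass_Iio_one hα))

lemma continuousWithinAt_cantorFun_Ici (x : ℝ) : ContinuousWithinAt (cantorFun α) (Ici x) x := by
  refine tendsto_order.2 ⟨fun a ha => eventually_nhdsWithin_of_forall fun y hy =>
    ha.trans_le (cantorFun_monotone hy), fun a ha => ?_⟩
  rcases le_or_gt 1 (cantorFun α x) with h1 | h1
  · exact Eventually.of_forall fun y => (cantorFun_le_one y).trans_lt (h1.trans_lt ha)
  obtain ⟨d, hd, hmem⟩ := exists_mem_dyadics_mem_Ioo (cantorFun_nonneg x) (lt_min ha h1)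
    (min_le_right _ _)
  have hx : x < dyadicMass α (Iic d) := not_le.1 fun h => (le_cantorFun hd h).not_gt hmem.1
  filter_upwards [nhdsWithin_le_nhds (eventually_lt_nhds hx)] with y hy
  exact (cantorFun_le_of_lt hα (dyadics_subset_Ioo hd).1.le hy).trans_lt
    (hmem.2.trans_le (min_le_left _ _))

noncomputable def cantorStieltjes : StieltjesFunction ℝ :=
  ⟨cantorFun α, cantorFun_monotone, continuousWithinAt_cantorFun_Ici hα⟩

lemma one_le_cantorStieltjes_measure_Kset {φ : ℝ → ℝ} (hφα : IsGapFunOf α φ) :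
    1 ≤ (cantorStieltjes hα).measure (Kset φ) := by
  set μ := (cantorStieltjes hα).measure
  have hgap : μ (⋃ d ∈ dyadics, Ioo (dyadicMass α (Iio d)) (dyadicMass α (Iic d))) = 0 := by
    refine (measure_biUnion_null_iff ((to_countable (Ici 1)).image _ |>.mono
      dyadicEnum_surjOn)).2 fun d hd => measure_mono_null Ioo_subset_Ioc_self ?_
    rw [StieltjesFunction.measure_Ioc]
    simp [cantorStieltjes, cantorFun_eq_of_mem_Icc hα hd ⟨le_rfl, (dyadicMass_Iio_lt_Iic hα hd).le⟩,
      cantorFun_eq_of_mem_Icc hα hd ⟨(dyadicMass_Iio_lt_Iic hα hd).le, le_rfl⟩]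
  have hIoc : μ (Ioc 0 1) = 1 := by
    rw [StieltjesFunction.measure_Ioc]
    simp [cantorStieltjes, cantorFun_zero hα, cantorFun_one hα]
  calc 1 = μ (Ioc 0 1) := hIoc.symm
    _ ≤ μ (Kset φ ∪ ⋃ d ∈ dyadics, Ioo (dyadicMass α (Iio d)) (dyadicMass α (Iic d))) := by
        refine measure_mono fun x hx => ?_
        rw [Kset_eq hα hφα, sdiff_union_self]
        exact Or.inl (Ioc_subset_Icc_self hx)
    _ ≤ μ (Kset φ) := (measure_union_le _ _).trans_eq (by rw [hgap, add_zero])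

end CantorFun

section Measure

variable (hα : IsGapSeq α)
include hα

/-- If `cantorFun α` rises by more than `4 / 2 ^ j` on `[u, v]`, then `[u, v]` contains two whole
cells of level `j` and the gap between them. -/
lemma knot_le_sub_of_cantorFun_lt {u v : ℝ} {j : ℕ}
    (h : cantorFun α u + 4 / 2 ^ j < cantorFun α v) : knot α j ≤ v - u := by
  have hp : (0 : ℝ) < 2 ^ j := by positivity
  set k := ⌊cantorFun α u * 2 ^ j⌋₊ + 1
  have hk₁ : cantorFun α u < k / 2 ^ j := by
    rw [lt_div_iff₀ hp]
    simpa [k] using Nat.lt_floor_add_one (cantorFun α u * 2 ^ j)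
  have hk₂ : (k + 1 + 1) / 2 ^ j < cantorFun α v := by
    have := Nat.floor_le (mul_nonneg (cantorFun_nonneg (α := α) u) hp.le)
    rw [div_lt_iff₀ hp]
    have : 4 / 2 ^ j * 2 ^ j = (4 : ℝ) := div_mul_cancel₀ _ hp.ne'
    push_cast [k]
    nlinarith
  have hk : k + 1 + 1 < 2 ^ j := by
    have : ((k + 1 + 1 : ℕ) : ℝ) < 2 ^ j := by
      push_cast
      rw [← div_lt_one hp]
      exact hk₂.trans_le (cantorFun_le_one v)
    exact_mod_cast this
  have hu : u < dyadicMass α (Iic (k / 2 ^ j)) := not_le.1 fun hle =>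
    (le_cantorFun ⟨k, j, (by omega : 0 < k), Nat.pos_of_ne_zero (by rintro rfl; simp at hk),
      (by omega : k < 2 ^ j), rfl⟩ hle).not_gt hk₁
  have hv : dyadicMass α (Iic ((k + 1 + 1) / 2 ^ j)) ≤ v := not_lt.1 fun hlt =>
    (cantorFun_le_of_lt hα (by positivity) hlt).not_gt hk₂
  have hcell₁ := cellBound_le_dyadicMass hα (j := j) (s := k) (by omega)
  have hcell₂ := cellBound_le_dyadicMass hα (j := j) (s := k + 1) (by omega)
  have hgap := dyadicMass_Iio_add_le_Iic hα (i := k + 1) (k := j) (by omega) (by omega)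
  have hlast := dyadicMass_mono hα (Iio_subset_Iic_self (a := ((k + 1 + 1 : ℝ)) / 2 ^ j))
  simp only [dyadicIoo] at hcell₁ hcell₂
  push_cast at hcell₂ hgap
  rw [← dyadicMass_Iio_sub_Iic hα (div_lt_div_of_pos_right (lt_add_one _) hp)] at hcell₁ hcell₂
  linarith [knot_le_add_cellBound hα j]

lemma cantorStieltjes_measure_le_of_ediam_lt {s : Set ℝ} {j : ℕ}
    (hs : Metric.ediam s < ENNReal.ofReal (knot α j)) :
    (cantorStieltjes hα).measure s ≤ ENNReal.ofReal (4 / 2 ^ j) := by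
  rcases s.eq_empty_or_nonempty with rfl | hne
  · simp
  have hb : Bornology.IsBounded s := Metric.isBounded_iff_ediam_ne_top.2 (hs.trans ofReal_lt_top).ne
  have hdiam : sSup s - sInf s < knot α j := by
    rw [Real.ediam_eq hb] at hs
    exact (ENNReal.ofReal_lt_ofReal_iff'.1 hs).1
  obtain ⟨u, hu, hspan⟩ : ∃ u < sInf s, sSup s - u < knot α j :=
    ⟨sInf s - (knot α j - (sSup s - sInf s)) / 2, by linarith, by linarith⟩
  have hsub : s ⊆ Ioc u (sSup s) := fun x hx =>
    ⟨by linarith [(hb.subset_Icc_sInf_sSup hx).1], (hb.subset_Icc_sInf_sSup hx).2⟩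
  refine (measure_mono hsub).trans ?_
  rw [StieltjesFunction.measure_Ioc]
  refine ENNReal.ofReal_le_ofReal (not_lt.1 fun hlt => hspan.not_ge ?_)
  change 4 / 2 ^ j < cantorFun α (sSup s) - cantorFun α u at hlt
  exact knot_le_sub_of_cantorFun_lt hα (by linarith)

lemma cantorStieltjes_measure_le_gauge {s : Set ℝ}
    (hs : Metric.ediam s < ENNReal.ofReal (knot α 0)) :
    (cantorStieltjes hα).measure s ≤ ENNReal.ofReal (8 * gauge α (Metric.ediam s).toReal) := by
  set x := (Metric.ediam s).toReal
  have hdiam : Metric.ediam s = ENNReal.ofReal x := (ofReal_toReal (hs.trans ofReal_lt_top).ne).symm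
  have hlt {j : ℕ} (hj : x < knot α j) : Metric.ediam s < ENNReal.ofReal (knot α j) := by
    rw [hdiam]
    exact (ENNReal.ofReal_lt_ofReal_iff (knot_pos hα j)).2 hj
  classical
  by_cases hx : ∃ j, knot α j ≤ x
  · obtain ⟨i, hi⟩ : ∃ i, Nat.find hx = i + 1 := Nat.exists_eq_succ_of_ne_zero fun h0 =>
      (hdiam ▸ hs).not_ge (ENNReal.ofReal_le_ofReal (h0 ▸ Nat.find_spec hx))
    have hxi : x < knot α i := not_le.1 (Nat.find_min hx (by omega))
    refine (cantorStieltjes_measure_le_of_ediam_lt hα (hlt hxi)).trans (ENNReal.ofReal_le_ofReal ?_)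
    have := inv_two_pow_le_gauge hα (hi ▸ Nat.find_spec hx)
    rw [pow_succ] at this
    calc 4 / 2 ^ i = 8 * (2 ^ i * 2 : ℝ)⁻¹ := by field_simp; norm_num
      _ ≤ 8 * gauge α x := by gcongr
  · simp only [not_exists, not_le] at hx
    have h4 : Tendsto (fun j : ℕ => ENNReal.ofReal (4 / 2 ^ j)) atTop (𝓝 0) := by
      simpa using ENNReal.tendsto_ofReal (tendsto_const_nhds.div_atTop
        (tendsto_pow_atTop_atTop_of_one_lt one_lt_two))
    exact (ge_of_tendsto' h4 fun j => cantorStieltjes_measure_le_of_ediam_lt hα (hlt (hx j))).trans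
      zero_le

lemma cantorStieltjes_measure_le_hausdorffGaugeMeasure :
    (cantorStieltjes hα).measure ≤ hausdorffGaugeMeasure fun x => 8 * gauge α x :=
  Measure.le_mkMetric _ _ (ENNReal.ofReal (knot α 0 / 2))
    (ENNReal.ofReal_pos.2 (half_pos (knot_pos hα 0))) fun _ hs =>
      cantorStieltjes_measure_le_gauge hα (hs.trans_lt
        ((ENNReal.ofReal_lt_ofReal_iff (knot_pos hα 0)).2 (half_lt_self (knot_pos hα 0))))

/-- Jensen's inequality for the concave gauge, in the form of its tangent `line α j`. -/
lemma sum_gauge_dyadicMass_dyadicIoo_le_one (j : ℕ) :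
    ∑ s ∈ Finset.range (2 ^ j), gauge α (dyadicMass α (dyadicIoo j s)) ≤ 1 := by
  have hsum := sum_dyadicMass_dyadicIoo_le_tail hα j
  have hline : ∑ s ∈ Finset.range (2 ^ j), line α j (dyadicMass α (dyadicIoo j s)) =
      1 + slope α j * (∑ s ∈ Finset.range (2 ^ j), dyadicMass α (dyadicIoo j s) -
        tail α j) := by
    simp only [line, Finset.sum_add_distrib, ← Finset.mul_sum, Finset.sum_sub_distrib,
      Finset.sum_const, Finset.card_range, nsmul_eq_mul, knot]
    push_cast
    field_simp
  calc _ ≤ ∑ s ∈ Finset.range (2 ^ j), line α j (dyadicMass α (dyadicIoo j s)) :=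
        Finset.sum_le_sum fun s _ => gauge_le_line hα j (dyadicMass_nonneg hα _)
    _ ≤ 1 := by nlinarith [slope_pos hα j]

lemma hausdorffGaugeMeasure_Kset_le {φ : ℝ → ℝ} (hφα : IsGapFunOf α φ) :
    hausdorffGaugeMeasure (fun x => 8 * gauge α x) (Kset φ) ≤ 8 := by
  have hlen (j s : ℕ) :
      dyadicMass α (Iio ((s + 1) / 2 ^ j)) - dyadicMass α (Iic (s / 2 ^ j)) =
        dyadicMass α (dyadicIoo j s) :=
    dyadicMass_Iio_sub_Iic hα (div_lt_div_of_pos_right (lt_add_one _) (by positivity))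
  refine (Measure.mkMetric_le_liminf_sum (ι := fun j => Fin (2 ^ j)) _
    (fun j => ENNReal.ofReal (tail α j)) (by simpa using ENNReal.tendsto_ofReal (tendsto_tail hα))
    (fun j s => Icc (dyadicMass α (Iic (s / 2 ^ j))) (dyadicMass α (Iio ((s + 1) / 2 ^ j))))
    (Eventually.of_forall fun j s => ?_)
    (Eventually.of_forall (Kset_subset_iUnion_Icc hα hφα)) _).trans
    ((liminf_le_liminf (Eventually.of_forall fun j => ?_)).trans_eq (liminf_const 8))
  · rw [Real.ediam_Icc, hlen]
    exact ENNReal.ofReal_le_ofReal (mass_mono hα (indicesIn_dyadicIoo_subset j s))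
  · simp only [Real.ediam_Icc, hlen, ENNReal.toReal_ofReal (dyadicMass_nonneg hα _)]
    rw [← ENNReal.ofReal_sum_of_nonneg fun s _ => mul_nonneg (by norm_num)
      (gauge_nonneg hα (dyadicMass_nonneg hα _)), ← ENNReal.ofReal_ofNat 8, ← Finset.mul_sum,
      Fin.sum_univ_eq_sum_range fun s => gauge α (dyadicMass α (dyadicIoo j s))]
    exact ENNReal.ofReal_le_ofReal (by linarith [sum_gauge_dyadicMass_dyadicIoo_le_one hα j])

end Measure

end CantorGap

theorem stmt_6_general (α : ℕ → ℝ) (hα : IsGapSeq α) (φ : ℝ → ℝ)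
    (hφα : IsGapFunOf α φ) :
    ∃ h : ℝ → ℝ, h 0 = 0 ∧ ContinuousOn h (Set.Ici 0) ∧ MonotoneOn h (Set.Ici 0) ∧
      (∀ x ∈ Set.Ici (0 : ℝ), 0 ≤ h x) ∧
      0 < hausdorffGaugeMeasure h (Kset φ) ∧ hausdorffGaugeMeasure h (Kset φ) < ⊤ := by
  open CantorGap in
  refine ⟨fun x => 8 * gauge α x, by simp [gauge_zero hα],
    continuousOn_const.mul (gauge_continuousOn hα),
    fun x hx y hy hxy => mul_le_mul_of_nonneg_left (gauge_monotoneOn hα hx hy hxy) (by norm_num),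
    fun x hx => mul_nonneg (by norm_num) (gauge_nonneg hα hx), ?_, ?_⟩
  · exact zero_lt_one.trans_le ((one_le_cantorStieltjes_measure_Kset hα hφα).trans
      (cantorStieltjes_measure_le_hausdorffGaugeMeasure hα _))
  · exact (hausdorffGaugeMeasure_Kset_le hα hφα).trans_lt (by norm_num)

/-- For every `α ∈ 𝒟𝒮`, the set `K_α` is `ℋ`-visible: there is a gauge
`h ∈ ℋ` (continuous, nondecreasing, `h 0 = 0`) with `0 < μ^h(K_α) < ∞`. -/
theorem stmt_6 (α : ℕ → ℝ) (hα : IsGapSeq α) (φ : ℝ → ℝ) (hφ : IsGapFun φ)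
    (hφα : IsGapFunOf α φ) :
    ∃ h : ℝ → ℝ, h 0 = 0 ∧ ContinuousOn h (Set.Ici 0) ∧ MonotoneOn h (Set.Ici 0) ∧
      (∀ x ∈ Set.Ici (0 : ℝ), 0 ≤ h x) ∧
      0 < hausdorffGaugeMeasure h (Kset φ) ∧ hausdorffGaugeMeasure h (Kset φ) < ⊤ :=
  stmt_6_general α hα φ hφα
end

section
/- Let ℒ be a collection of nonempty compact subsets of ℝ such that: (1) for every ε > 0 there is A ∈ ℒ with diam A < ε; and (2) whenever A ∈ ℒ and A₁, …, Aₙ are translates of A, the union A₁ ∪ ⋯ ∪ Aₙ belongs to ℒ. Then ℒ is dense in 𝒞(ℝ). -/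
open Set TopologicalSpace

/-- Any collection `ℒ` of nonempty compact subsets of `ℝ` containing sets of
arbitrarily small diameter and closed under finite unions of translates of a member is
dense in the space `𝒞(ℝ)` of nonempty compact subsets of `ℝ` with the Hausdorff metric. -/
theorem stmt_7 (L : Set (Set ℝ))
    (hcomp : ∀ A ∈ L, A.Nonempty ∧ IsCompact A)
    (hsmall : ∀ ε : ℝ, 0 < ε → ∃ A ∈ L, Metric.diam A < ε)
    (htrans : ∀ A ∈ L, ∀ (n : ℕ) (t : Fin (n + 1) → ℝ),
      (⋃ i, (fun x => x + t i) '' A) ∈ L) :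
    Dense {K : NonemptyCompacts ℝ | (K : Set ℝ) ∈ L} := by
  rw [Metric.dense_iff]
  intro K ε hε
  have hε4 : 0 < ε / 4 := by linarith
  obtain ⟨A, hAL, hAd⟩ := hsmall (ε / 4) hε4
  obtain ⟨⟨hAne, hAcomp⟩⟩ : (A.Nonempty ∧ IsCompact A) ∧ True := ⟨hcomp A hAL, trivial⟩
  obtain ⟨a, ha⟩ := hAne
  -- finite net of K
  obtain ⟨s, hsK, hsfin, hscov⟩ := K.isCompact.finite_cover_balls hε4
  obtain ⟨k0, hk0⟩ := K.nonempty
  -- index the net (with k0 added to ensure nonemptiness) by Fin (n+1)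
  set F : Finset ℝ := insert k0 hsfin.toFinset with hF
  have hFcard : F.card = (F.card - 1) + 1 := by
    have : 0 < F.card := Finset.card_pos.2 ⟨k0, Finset.mem_insert_self _ _⟩
    omega
  set n : ℕ := F.card - 1
  let e : Fin (n + 1) ≃ F := (F.equivFin.trans (finCongr hFcard)).symm
  let t : Fin (n + 1) → ℝ := fun i => (e i : ℝ) - a
  have hFK : ∀ x ∈ F, x ∈ (K : Set ℝ) := by
    intro x hx
    rcases Finset.mem_insert.1 hx with h | h
    · exact h ▸ hk0
    · exact hsK (hsfin.mem_toFinset.1 h)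
  set B : Set ℝ := ⋃ i, (fun x => x + t i) '' A with hB
  have hBL : B ∈ L := htrans A hAL n t
  obtain ⟨hBne, hBcomp⟩ := hcomp B hBL
  refine ⟨⟨⟨B, hBcomp⟩, hBne⟩, ?_, hBL⟩
  rw [Metric.mem_ball, Metric.NonemptyCompacts.dist_eq]
  have hbd : Metric.hausdorffDist B (K : Set ℝ) ≤ ε / 2 := by
    apply Metric.hausdorffDist_le_of_mem_dist (by linarith)
    · -- every point of B is close to K
      intro y hy
      simp only [hB, mem_iUnion, mem_image] at hy
      obtain ⟨i, z, hzA, rfl⟩ := hy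
      refine ⟨(e i : ℝ), hFK _ (e i).2, ?_⟩
      have : dist (z + t i) ((e i : ℝ)) = dist z a := by
        simp only [t, Real.dist_eq]
        ring_nf
      rw [this]
      calc dist z a ≤ Metric.diam A := Metric.dist_le_diam_of_mem hAcomp.isBounded hzA ha
        _ ≤ ε / 2 := by linarith
    · -- every point of K is close to B
      intro x hx
      obtain ⟨c, hc, hxc⟩ : ∃ c ∈ s, x ∈ Metric.ball c (ε / 4) := by
        have := hscov hx
        simpa using this
      have hcF : c ∈ F := Finset.mem_insert_of_mem (hsfin.mem_toFinset.2 hc)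
      refine ⟨c, ?_, ?_⟩
      · have : c = a + t (e.symm ⟨c, hcF⟩) := by
          simp [t]
        rw [this, hB]
        exact mem_iUnion.2 ⟨e.symm ⟨c, hcF⟩, ⟨a, ha, by ring⟩⟩
      · rw [Metric.mem_ball] at hxc
        linarith
  calc Metric.hausdorffDist B (K : Set ℝ) ≤ ε / 2 := hbd
    _ < ε := by linarith
end

section
/- The collection of nonempty compact subsets of ℝ that are ℋ-visible is dense in 𝒞(ℝ). -/
open Set TopologicalSpace MeasureTheory ENNReal

/-- `M` is `ℋ`-visible: `0 < μ^h M < ∞` for some gauge `h ∈ ℋ`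
(`h : [0,∞) → [0,∞)` continuous, nondecreasing, `h 0 = 0`). -/
def HVisible (M : Set ℝ) : Prop :=
  ∃ h : ℝ → ℝ, h 0 = 0 ∧ ContinuousOn h (Set.Ici 0) ∧ MonotoneOn h (Set.Ici 0) ∧
    (∀ x ∈ Set.Ici (0 : ℝ), 0 ≤ h x) ∧
    0 < hausdorffGaugeMeasure h M ∧ hausdorffGaugeMeasure h M < ⊤

/-!
Adjoining a short interval `[x, x + δ]` at a point `x` of a compact set `K` moves `K` by at most
`δ` in the Hausdorff metric and produces a compact set of positive, finite Lebesgue measure.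
Lebesgue measure on `ℝ` is the Hausdorff measure with gauge `h = id`, so that set is visible.
-/

theorem hausdorffGaugeMeasure_id : hausdorffGaugeMeasure id = volume := by
  have hgauge : ∀ᶠ d in nhds (0 : ℝ≥0∞), ENNReal.ofReal (id d.toReal) = d ^ (1 : ℝ) := by
    filter_upwards [eventually_lt_nhds zero_lt_one] with d hd
    rw [ENNReal.rpow_one, id, ENNReal.ofReal_toReal hd.ne_top]
  calc hausdorffGaugeMeasure id = μH[1] :=
        le_antisymm (Measure.mkMetric_mono (hgauge.mono fun _ h => h.le))
          (Measure.mkMetric_mono (hgauge.mono fun _ h => h.ge))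
    _ = volume := hausdorffMeasure_real

theorem hVisible_of_volume {M : Set ℝ} (h₀ : 0 < volume M) (hfin : volume M < ⊤) :
    HVisible M :=
  ⟨id, rfl, continuousOn_id, monotoneOn_id, fun _ hx => hx,
    hausdorffGaugeMeasure_id ▸ h₀, hausdorffGaugeMeasure_id ▸ hfin⟩

theorem NonemptyCompacts.dist_sup_le {α : Type*} [MetricSpace α] {K L : NonemptyCompacts α}
    {δ : ℝ} (hδ : 0 ≤ δ) (hL : ∀ y ∈ L, ∃ x ∈ K, dist y x ≤ δ) : dist (K ⊔ L) K ≤ δ := by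
  rw [Metric.NonemptyCompacts.dist_eq, NonemptyCompacts.coe_sup]
  refine Metric.hausdorffDist_le_of_mem_dist hδ ?_ fun x hx => ⟨x, Or.inl hx, by simpa⟩
  rintro y (hy | hy)
  · exact ⟨y, hy, by simpa⟩
  · exact hL y hy

def NonemptyCompacts.Icc {a b : ℝ} (hab : a ≤ b) : NonemptyCompacts ℝ :=
  ⟨⟨Set.Icc a b, isCompact_Icc⟩, nonempty_Icc.2 hab⟩

/-- The collection of nonempty compact subsets of `ℝ` that are `ℋ`-visible
is dense in `𝒞(ℝ)`. -/
theorem stmt_8 : Dense {K : NonemptyCompacts ℝ | HVisible (K : Set ℝ)} := by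
  rw [Metric.dense_iff]
  intro K ε hε
  obtain ⟨x, hx⟩ := K.nonempty
  have hδ : 0 < ε / 2 := half_pos hε
  let I := NonemptyCompacts.Icc (le_add_of_nonneg_right hδ.le : x ≤ x + ε / 2)
  have hclose : dist (K ⊔ I) K ≤ ε / 2 := by
    refine NonemptyCompacts.dist_sup_le hδ.le fun y hy => ⟨x, hx, ?_⟩
    rw [Real.dist_eq, abs_of_nonneg (sub_nonneg.2 hy.1)]
    linarith [hy.2]
  refine ⟨K ⊔ I, Metric.mem_ball.2 (hclose.trans_lt (half_lt_self hε)), ?_⟩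
  refine hVisible_of_volume ?_ (K ⊔ I).isCompact.measure_lt_top
  calc (0 : ℝ≥0∞) < volume (Set.Icc x (x + ε / 2)) := by simpa [Real.volume_Icc] using hδ
    _ ≤ volume ((K ⊔ I : NonemptyCompacts ℝ) : Set ℝ) := by
      rw [NonemptyCompacts.coe_sup]
      exact measure_mono subset_union_right
end

section
/- If K ⊆ ℝ is an uncountable compact set that is linearly independent over the rationals, then there exists a translation-invariant Borel measure μ on ℝ such that 0 < μ(K) < ∞. -/
/-!
If `x, x + t, y, y + t` all lie in a `ℚ`-independent set and `t ≠ 0`, the relation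
`x + (y + t) = (x + t) + y` forces `x = y`; so `K` meets `K - t` in at most one point. Let `ν` be
an atomless probability measure carried by `K` (the Borel isomorphism theorem provides one, as
`K` is an uncountable Borel set). The sum over all `t ∈ ℝ` of the translates of `ν` is translation
invariant, and of its summands only `ν` itself charges `K`, so it gives `K` mass `ν K = 1`.
-/

open Set MeasureTheory

/-- A (Borel) measure on `ℝ` is translation invariant if `μ(A + t) = μ(A)` for every
Borel set `A` and every `t : ℝ`. -/
def TransInvariant (μ : Measure ℝ) : Prop :=
  ∀ (t : ℝ) (A : Set ℝ), MeasurableSet A → μ ((fun x => x + t) '' A) = μ A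

theorem LinearIndependent.add_eq_add_iff {ι R V : Type*} [Ring R] [CharZero R] [AddCommGroup V]
    [Module R V] {v : ι → V} (hv : LinearIndependent R v) {i j k l : ι} :
    v i + v j = v k + v l ↔ (i = k ∧ j = l) ∨ (i = l ∧ j = k) := by
  have h := Finsupp.single_add_single_eq_single_add_single (k := i) (l := j) (m := k) (n := l)
    (one_ne_zero (α := R)) one_ne_zero
  rw [← hv.finsuppLinearCombination_injective.eq_iff] at h
  simp only [map_add, Finsupp.linearCombination_single, one_smul] at h
  have h2 : (1 + 1 : R) ≠ 0 := by norm_num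
  simp [h, h2]

theorem LinearIndependent.inter_preimage_add_subsingleton {R V : Type*} [Ring R] [CharZero R]
    [AddCommGroup V] [Module R V] {K : Set V} (hK : LinearIndependent R ((↑) : K → V))
    {t : V} (ht : t ≠ 0) : (K ∩ (· + t) ⁻¹' K).Subsingleton := by
  rintro x ⟨hx, hxt⟩ y ⟨hy, hyt⟩
  have hsum : x + (y + t) = (x + t) + y := by abel
  rcases (hK.add_eq_add_iff (i := ⟨x, hx⟩) (j := ⟨y + t, hyt⟩) (k := ⟨x + t, hxt⟩)
    (l := ⟨y, hy⟩)).1 hsum with ⟨hxx, -⟩ | ⟨hxy, -⟩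
  · exact absurd (by simpa using congrArg Subtype.val hxx) ht
  · exact congrArg Subtype.val hxy

theorem MeasurableEmbedding.nullSingletonClass_map {α β : Type*} [MeasurableSpace α]
    [MeasurableSpace β] {f : α → β} (hf : MeasurableEmbedding f) (μ : Measure α)
    [NullSingletonClass μ] : NullSingletonClass (μ.map f) :=
  ⟨fun y => by
    rw [hf.map_apply]
    exact (subsingleton_singleton.preimage hf.injective).measure_zero μ⟩

theorem exists_isProbabilityMeasure_nullSingletonClass_of_not_countable {α : Type*}
    [MeasurableSpace α] [StandardBorelSpace α] {K : Set α} (hK : MeasurableSet K)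
    (hunc : ¬K.Countable) :
    ∃ ν : Measure α, IsProbabilityMeasure ν ∧ NullSingletonClass ν ∧ ν Kᶜ = 0 := by
  have := hK.standardBorel
  have hI : ¬Countable unitInterval := fun _ => by
    simpa using (countable_univ (α := unitInterval)).measure_zero volume
  let e : unitInterval ≃ᵐ K :=
    PolishSpace.measurableEquivOfNotCountable hI (by rwa [countable_coe_iff])
  have hf : MeasurableEmbedding (Subtype.val ∘ e) :=
    (MeasurableEmbedding.subtype_coe hK).comp e.measurableEmbedding
  refine ⟨volume.map (Subtype.val ∘ e), Measure.isProbabilityMeasure_map hf.measurable.aemeasurable,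
    hf.nullSingletonClass_map _, ?_⟩
  have hpre : Subtype.val ∘ e ⁻¹' K = univ := eq_univ_of_forall fun x => (e x).2
  rw [hf.map_apply, preimage_compl, hpre, compl_univ, measure_empty]

namespace MeasureTheory.Measure

variable {G : Type*} [AddGroup G] [MeasurableSpace G] [MeasurableAdd G]

noncomputable def sumTranslates (ν : Measure G) : Measure G :=
  Measure.sum fun t => ν.map (· + t)

instance (ν : Measure G) : ν.sumTranslates.IsAddRightInvariant := by
  refine ⟨fun g => ?_⟩
  rw [sumTranslates, map_sum (measurable_add_const g).aemeasurable]
  have hcomp (t : G) : (· + g) ∘ (· + t) = (· + (t + g)) := funext fun x => add_assoc x t g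
  simp_rw [map_map (measurable_add_const g) (measurable_add_const _), hcomp]
  exact sum_comp_equiv (Equiv.addRight g) fun t => ν.map (· + t)

theorem sumTranslates_apply (ν : Measure G) {s : Set G} (hs : MeasurableSet s) :
    ν.sumTranslates s = ∑' t, ν ((· + t) ⁻¹' s) := by
  simp only [sumTranslates, sum_apply _ hs, map_apply (measurable_add_const _) hs]

theorem sumTranslates_apply_eq_of_countable_inter (ν : Measure G) [NullSingletonClass ν]
    {K : Set G} (hK : MeasurableSet K) (hνK : ν Kᶜ = 0)
    (hsmall : ∀ t ≠ 0, (K ∩ (· + t) ⁻¹' K).Countable) :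
    ν.sumTranslates K = ν K := by
  rw [sumTranslates_apply ν hK, tsum_eq_single 0 fun t ht => ?_]
  · simp
  · rw [← measure_inter_conull hνK, inter_comm]
    exact (hsmall t ht).measure_zero ν

end MeasureTheory.Measure

theorem transInvariant_of_isAddRightInvariant (μ : Measure ℝ) [μ.IsAddRightInvariant] :
    TransInvariant μ := fun t A _ => by
  rw [image_add_right, measure_preimage_add_right]

/-- If `K ⊆ ℝ` is an uncountable compact set that is linearly independent
over `ℚ`, then there is a translation-invariant Borel measure `μ` on `ℝ` with
`0 < μ(K) < ∞`. -/
theorem stmt_10 (K : Set ℝ) (hK : IsCompact K) (hunc : ¬ K.Countable)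
    (hli : LinearIndependent ℚ ((↑) : K → ℝ)) :
    ∃ μ : Measure ℝ, TransInvariant μ ∧ 0 < μ K ∧ μ K < ⊤ := by
  have hKm : MeasurableSet K := hK.isClosed.measurableSet
  obtain ⟨ν, _, _, hνK⟩ :=
    exists_isProbabilityMeasure_nullSingletonClass_of_not_countable hKm hunc
  have hμK : ν.sumTranslates K = 1 := by
    rw [ν.sumTranslates_apply_eq_of_countable_inter hKm hνK
      fun t ht => (hli.inter_preimage_add_subsingleton ht).countable]
    exact (prob_compl_eq_zero_iff hKm).1 hνK
  exact ⟨ν.sumTranslates, transInvariant_of_isAddRightInvariant _, by simp [hμK],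
    by simp [hμK]⟩
end

section
/- Let G be an uncountable abelian Polish group with a compatible translation-invariant complete metric d. Then G has a good sequence: there exists a sequence (t_k) of distinct points of G with ∑_k d(0, t_k) < ∞ such that the map σ ↦ p(σ) = ∑_{k=1}^∞ σ(k)·t_k is injective on {0,1}^ℕ. -/
open Set TopologicalSpace

/-!
A translation-invariant metric on an abelian group is the metric of the norm `‖x‖ = d(0, x)`.
Separability and uncountability make `0` a non-isolated point, so one can pick nonzero `t k`
with `‖t (k + 1)‖ ≤ ‖t k‖ / 3`. Then each tail `∑_{j > k} ‖t j‖` is at most `‖t k‖ / 2`, so if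
`σ ≠ τ` first differ at `k`, the term `± t k` of `p(σ) - p(τ) = 0` cannot be cancelled by the
remaining terms.
-/

/-- The metric of this structure is the given one up to definitional unfolding, so instances
such as `CompleteSpace G` stay available for it. -/
abbrev NormedAddCommGroup.ofDistAddRight {G : Type*} [AddCommGroup G] [MetricSpace G]
    (h : ∀ a b u : G, dist (a + u) (b + u) = dist a b) : NormedAddCommGroup G where
  __ := ‹AddCommGroup G›
  __ := ‹MetricSpace G›
  norm x := dist 0 x
  dist_eq x y := by
    show dist x y = dist 0 (-x + y)
    rw [← h x y (-x), add_neg_cancel, add_comm]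

section
variable {E : Type*} [NormedAddCommGroup E]

noncomputable def subsetSum (t : ℕ → E) (σ : ℕ → Bool) : E := ∑' k, if σ k then t k else 0

theorem subsetSum_decide_eq (t : ℕ → E) (i : ℕ) :
    subsetSum t (fun k => decide (k = i)) = t i := by
  simp [subsetSum]

theorem Function.Injective.of_subsetSum {t : ℕ → E} (h : Function.Injective (subsetSum t)) :
    Function.Injective t := fun i j hij => by
  simpa [eq_comm] using congrFun (h (a₁ := fun k => decide (k = i)) (a₂ := fun k => decide (k = j))
    (by rw [subsetSum_decide_eq, subsetSum_decide_eq, hij])) i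

theorem norm_ite_le (t : ℕ → E) (σ : ℕ → Bool) (j : ℕ) :
    ‖if σ j then t j else 0‖ ≤ ‖t j‖ := by
  split_ifs <;> simp

theorem norm_ite_sub_ite_le (t : ℕ → E) (σ τ : ℕ → Bool) (j : ℕ) :
    ‖(if σ j then t j else 0) - (if τ j then t j else 0)‖ ≤ ‖t j‖ := by
  cases σ j <;> cases τ j <;> simp

theorem injective_subsetSum_of_tsum_tail_lt [CompleteSpace E] {t : ℕ → E}
    (hs : Summable fun k => ‖t k‖) (htail : ∀ k, ∑' j, ‖t (j + (k + 1))‖ < ‖t k‖) :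
    Function.Injective (subsetSum t) := by
  intro σ τ hστ
  by_contra hne
  have hex : ∃ k, σ k ≠ τ k := Function.ne_iff.1 hne
  obtain ⟨k, hk, hmin⟩ : ∃ k, σ k ≠ τ k ∧ ∀ j < k, σ j = τ j :=
    ⟨Nat.find hex, Nat.find_spec hex, fun j hj => not_not.1 (Nat.find_min hex hj)⟩
  set c : ℕ → E := fun j => (if σ j then t j else 0) - (if τ j then t j else 0)
  have hc_norm : ∀ j, ‖c j‖ ≤ ‖t j‖ := norm_ite_sub_ite_le t σ τ
  have hc_norm_sum : Summable fun j => ‖c j‖ :=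
    hs.of_nonneg_of_le (fun _ => norm_nonneg _) hc_norm
  have hck : ‖c k‖ = ‖t k‖ := by
    cases hσ : σ k <;> cases hτ : τ k <;> simp_all [c]
  have hc_sum : ∑' j, c j = 0 := by
    rw [Summable.tsum_sub, sub_eq_zero]
    · exact hστ
    all_goals exact .of_norm (hs.of_nonneg_of_le (fun _ => norm_nonneg _) (norm_ite_le t _))
  have hhead : ∑ j ∈ Finset.range (k + 1), c j = c k := by
    rw [Finset.sum_range_succ, Finset.sum_eq_zero, zero_add]
    intro j hj
    simp [c, hmin j (Finset.mem_range.1 hj)]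
  have hsplit : c k = -∑' j, c (j + (k + 1)) := by
    rw [eq_neg_iff_add_eq_zero, ← hhead, (Summable.of_norm hc_norm_sum).sum_add_tsum_nat_add,
      hc_sum]
  have hc_tail : Summable fun j => ‖c (j + (k + 1))‖ :=
    (summable_nat_add_iff (f := fun j => ‖c j‖) (k + 1)).2 hc_norm_sum
  have ht_tail : Summable fun j => ‖t (j + (k + 1))‖ := (summable_nat_add_iff (k + 1)).2 hs
  have hle : ‖t k‖ ≤ ∑' j, ‖t (j + (k + 1))‖ := calc
    ‖t k‖ = ‖∑' j, c (j + (k + 1))‖ := by rw [← hck, hsplit, norm_neg]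
    _ ≤ ∑' j, ‖c (j + (k + 1))‖ := norm_tsum_le_tsum_norm hc_tail
    _ ≤ ∑' j, ‖t (j + (k + 1))‖ := hc_tail.tsum_le_tsum (fun j => hc_norm _) ht_tail
  exact (htail k).not_ge hle

theorem norm_add_le_pow_mul {t : ℕ → E} {r : ℝ} (hr : 0 ≤ r) (h : ∀ n, ‖t (n + 1)‖ ≤ r * ‖t n‖)
    (n k : ℕ) : ‖t (n + k)‖ ≤ r ^ n * ‖t k‖ := by
  simpa using le_geom (u := fun n => ‖t (n + k)‖) hr n fun j _ => by
    simpa [Nat.add_right_comm j 1 k] using h (j + k)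

theorem summable_norm_of_norm_succ_le {t : ℕ → E} {r : ℝ} (hr₀ : 0 ≤ r) (hr₁ : r < 1)
    (h : ∀ n, ‖t (n + 1)‖ ≤ r * ‖t n‖) : Summable fun n => ‖t n‖ :=
  .of_nonneg_of_le (fun _ => norm_nonneg _)
    (fun n => by simpa using norm_add_le_pow_mul hr₀ h n 0)
    ((summable_geometric_of_lt_one hr₀ hr₁).mul_right _)

theorem tsum_norm_tail_lt {t : ℕ → E} {r : ℝ} (hr₀ : 0 ≤ r) (hr : r < 1 / 2)
    (h : ∀ n, ‖t (n + 1)‖ ≤ r * ‖t n‖) (k : ℕ) (hk : t k ≠ 0) :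
    ∑' j, ‖t (j + (k + 1))‖ < ‖t k‖ := by
  have hgeom : HasSum (fun j => r ^ (j + 1) * ‖t k‖) (r / (1 - r) * ‖t k‖) := by
    have := (hasSum_geometric_of_lt_one hr₀ (by linarith)).mul_left r |>.mul_right ‖t k‖
    simpa [pow_succ, mul_comm, div_eq_mul_inv] using this
  have hbound : ∀ j, ‖t (j + (k + 1))‖ ≤ r ^ (j + 1) * ‖t k‖ := fun j => by
    rw [← add_assoc, Nat.add_right_comm]
    exact norm_add_le_pow_mul hr₀ h (j + 1) k
  have hsum : Summable fun j => ‖t (j + (k + 1))‖ :=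
    hgeom.summable.of_nonneg_of_le (fun _ => norm_nonneg _) hbound
  have hratio : r / (1 - r) < 1 := by rw [div_lt_one] <;> linarith
  calc ∑' j, ‖t (j + (k + 1))‖ ≤ r / (1 - r) * ‖t k‖ := hasSum_le hbound hsum.hasSum hgeom
    _ < ‖t k‖ := mul_lt_of_lt_one_left (norm_pos_iff.2 hk) hratio

theorem exists_seq_ne_zero_norm_succ_le (hsmall : ∀ ε > 0, ∃ x : E, x ≠ 0 ∧ ‖x‖ < ε) {r : ℝ}
    (hr : 0 < r) : ∃ t : ℕ → E, (∀ n, t n ≠ 0) ∧ ∀ n, ‖t (n + 1)‖ ≤ r * ‖t n‖ := by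
  choose g hg0 hg using fun x : {x : E // x ≠ 0} => hsmall (r * ‖(x : E)‖) (by
    have := norm_pos_iff.2 x.2
    positivity)
  obtain ⟨x₀, hx₀, -⟩ := hsmall 1 one_pos
  let next : {x : E // x ≠ 0} → {x : E // x ≠ 0} := fun x => ⟨g x, hg0 x⟩
  refine ⟨fun n => (next^[n] ⟨x₀, hx₀⟩ : E), fun n => (next^[n] _).2, fun n => ?_⟩
  dsimp only
  rw [Function.iterate_succ_apply']
  exact (hg _).le

theorem exists_ne_zero_norm_lt [SeparableSpace E] [Uncountable E] {ε : ℝ} (hε : 0 < ε) :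
    ∃ x : E, x ≠ 0 ∧ ‖x‖ < ε := by
  by_contra! hbig
  have : DiscreteTopology E := discreteTopology_of_isOpen_singleton_zero <|
    Metric.isOpen_singleton_iff.2 ⟨ε, hε, fun y hy =>
      by_contra fun hy0 => (hbig y hy0).not_gt (by simpa using hy)⟩
  exact not_countable (separableSpace_iff_countable.1 ‹_›)

theorem exists_injective_subsetSum [CompleteSpace E] [SeparableSpace E] [Uncountable E] :
    ∃ t : ℕ → E, Function.Injective t ∧ (Summable fun k => ‖t k‖) ∧
      Function.Injective (subsetSum t) := by
  obtain ⟨t, ht0, ht⟩ := exists_seq_ne_zero_norm_succ_le (E := E)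
    (fun ε hε => exists_ne_zero_norm_lt hε) (r := 1 / 3) (by norm_num)
  have hs := summable_norm_of_norm_succ_le (by norm_num) (by norm_num) ht
  have hinj := injective_subsetSum_of_tsum_tail_lt hs fun k =>
    tsum_norm_tail_lt (by norm_num) (by norm_num) ht k (ht0 k)
  exact ⟨t, hinj.of_subsetSum, hs, hinj⟩

end

theorem stmt_13_general {G : Type*} [AddCommGroup G] [MetricSpace G] [CompleteSpace G]
    [SeparableSpace G] [Uncountable G]
    (hinv : ∀ a b u : G, dist (a + u) (b + u) = dist a b) :
    ∃ t : ℕ → G, Function.Injective t ∧ (Summable fun k => dist (0 : G) (t k)) ∧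
      Function.Injective (fun σ : ℕ → Bool => ∑' k, if σ k then t k else (0 : G)) := by
  let := NormedAddCommGroup.ofDistAddRight hinv
  exact exists_injective_subsetSum

/-- Every uncountable abelian Polish group `G` (with a compatible
translation-invariant complete metric) has a good sequence: a sequence `(t k)` of distinct
points with `∑ₖ d(0, t k) < ∞` such that `σ ↦ p(σ) = ∑ₖ σ(k)·t k` is injective on
`{0,1}^ℕ`. -/
theorem stmt_13 {G : Type*} [AddCommGroup G] [MetricSpace G] [CompleteSpace G]
    [SeparableSpace G] [IsTopologicalAddGroup G] [Uncountable G]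
    (hinv : ∀ a b u : G, dist (a + u) (b + u) = dist a b) :
    ∃ t : ℕ → G, Function.Injective t ∧ (Summable fun k => dist (0 : G) (t k)) ∧
      Function.Injective (fun σ : ℕ → Bool => ∑' k, if σ k then t k else (0 : G)) :=
  stmt_13_general hinv
end

section
/- Let G be an abelian Polish group with a compatible translation-invariant complete metric, (t_k)_{k≥1} a good sequence in G, and (A_k)_{k≥0} a decreasing sequence of subsets of ℕ with A₀ = ℕ and A_k \ A_{k+1} infinite for all k ≥ 0. Fix k, l ≥ 1. Then the family of translates {C⁰_{k,l} + p(τ) : τ ∈ D_{k,l}} is pairwise disjoint, its union equals C_{k+l}, and it is uncountable (indeed p is injective on D_{k,l} and D_{k,l} is uncountable). -/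
open Set TopologicalSpace

/-- `p(σ) = ∑ₖ σ(k)·t k` for `σ ∈ {0,1}^ℕ`. -/
noncomputable def pSum {G : Type*} [AddCommGroup G] [TopologicalSpace G]
    (t : ℕ → G) (σ : ℕ → Bool) : G :=
  ∑' k, if σ k then t k else 0

/-- `B_k = {σ ∈ {0,1}^ℕ : σ(i) = 0 if i < k or i ∈ A_k}`. -/
def BSet (A : ℕ → Set ℕ) (k : ℕ) : Set (ℕ → Bool) :=
  {σ | ∀ i : ℕ, (i < k ∨ i ∈ A k) → σ i = false}

/-- `B⁰_{k,l} = {σ ∈ B_k : σ(k) = ⋯ = σ(k+l-1) = 0}`. -/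
def BSet0 (A : ℕ → Set ℕ) (k l : ℕ) : Set (ℕ → Bool) :=
  {σ | σ ∈ BSet A k ∧ ∀ i : ℕ, k ≤ i → i < k + l → σ i = false}

/-- `D_{k,l} = {τ ∈ {0,1}^ℕ : τ(s) = 0 if s < k + l or s ∉ A_k \ A_{k+l}}`. -/
def DSet (A : ℕ → Set ℕ) (k l : ℕ) : Set (ℕ → Bool) :=
  {τ | ∀ s : ℕ, (s < k + l ∨ s ∉ A k \ A (k + l)) → τ s = false}

/-!
Split `ρ ∈ B_{k+l}` along `A_k`: the part off `A_k` lies in `B⁰_{k,l}` and the part on `A_k`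
lies in `D_{k,l}`. Since the two parts have disjoint supports, `p` turns this splitting into a
sum, so `C_{k+l}` is the union of the translates `C⁰_{k,l} + p(τ)`; injectivity of `p` makes the
splitting unique, so the translates are pairwise disjoint. `D_{k,l}` contains every `τ`
supported in the infinite set `(A_{k+l-1} \ A_{k+l}) \ [0, k+l)`, hence is uncountable.
-/

section InvariantMetric

variable {G : Type*} [AddCommGroup G] [MetricSpace G] [CompleteSpace G]

/-- With a translation-invariant metric, `dist 0` is a norm on `G`. -/
lemma summable_of_summable_dist_zero (hmetinv : ∀ a b u : G, dist (a + u) (b + u) = dist a b)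
    {ι : Type*} {f : ι → G} (hf : Summable fun i => dist (0 : G) (f i)) : Summable f := by
  let _ : Norm G := ⟨dist 0⟩
  let _ : SeminormedAddCommGroup G := SeminormedAddCommGroup.ofAddDist' (fun _ => rfl)
    fun x y z => by rw [add_comm z, add_comm z, hmetinv]
  have hf' : Summable fun i => ‖f i‖ := hf
  exact hf'.of_norm

lemma summable_ite_of_summable_dist_zero
    (hmetinv : ∀ a b u : G, dist (a + u) (b + u) = dist a b) {t : ℕ → G}
    (hsum : Summable fun k => dist (0 : G) (t k)) (σ : ℕ → Bool) :
    Summable fun k => if σ k then t k else 0 :=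
  summable_of_summable_dist_zero hmetinv <|
    hsum.of_nonneg_of_le (fun _ => dist_nonneg) fun k => by cases σ k <;> simp

lemma pSum_add_pSum [IsTopologicalAddGroup G]
    (hmetinv : ∀ a b u : G, dist (a + u) (b + u) = dist a b) {t : ℕ → G}
    (hsum : Summable fun k => dist (0 : G) (t k)) {σ τ : ℕ → Bool}
    (h : ∀ s, σ s = true → τ s = false) :
    pSum t σ + pSum t τ = pSum t fun s => σ s || τ s := by
  rw [pSum, pSum, pSum, ← (summable_ite_of_summable_dist_zero hmetinv hsum σ).tsum_add
    (summable_ite_of_summable_dist_zero hmetinv hsum τ)]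
  refine tsum_congr fun s => ?_
  cases hσ : σ s <;> cases hτ : τ s <;> simp_all

end InvariantMetric

lemma not_countable_setOf_eq_false_of_notMem {α : Type*} {S : Set α} (hS : S.Infinite) :
    ¬ {τ : α → Bool | ∀ s ∉ S, τ s = false}.Countable := by
  intro hcount
  let e : ℕ → α := fun n => Set.Infinite.natEmbedding S hS n
  have he : Function.Injective e :=
    Subtype.val_injective.comp (Set.Infinite.natEmbedding S hS).injective
  have hext : MapsTo (fun g => Function.extend e g fun _ => false) univ
      {τ : α → Bool | ∀ s ∉ S, τ s = false} := by
    intro g _ s hs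
    refine Function.extend_apply' _ _ _ ?_
    rintro ⟨n, rfl⟩
    exact hs (Set.Infinite.natEmbedding S hS n).2
  have : Uncountable (ℕ → Bool) := by
    rw [← Cardinal.aleph0_lt_mk_iff]
    simpa using Cardinal.cantor Cardinal.aleph0
  exact not_countable_univ ((hcount.preimage (Function.extend_injective he _)).mono hext)

section Splitting

variable {A : ℕ → Set ℕ} {k l : ℕ} {σ τ : ℕ → Bool}

lemma BSet0_apply_eq_false_of_mem (hσ : σ ∈ BSet0 A k l) {s : ℕ} (hs : s ∈ A k) :
    σ s = false :=
  hσ.1 s (Or.inr hs)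

lemma DSet_apply_eq_false_of_notMem (hτ : τ ∈ DSet A k l) {s : ℕ} (hs : s ∉ A k) :
    τ s = false :=
  hτ s (Or.inr fun h => hs h.1)

lemma DSet_apply_eq_false_of_BSet0 (hσ : σ ∈ BSet0 A k l) (hτ : τ ∈ DSet A k l) (s : ℕ)
    (hs : σ s = true) : τ s = false :=
  DSet_apply_eq_false_of_notMem hτ fun h => by simp [BSet0_apply_eq_false_of_mem hσ h] at hs

lemma or_mem_BSet_add (hA : A (k + l) ⊆ A k) (hσ : σ ∈ BSet0 A k l) (hτ : τ ∈ DSet A k l) :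
    (fun s => σ s || τ s) ∈ BSet A (k + l) := by
  rintro i (hi | hi)
  · have hσi : σ i = false := by
      rcases Nat.lt_or_ge i k with h | h
      · exact hσ.1 i (Or.inl h)
      · exact hσ.2 i h hi
    simp [hσi, hτ i (Or.inl hi)]
  · simp [BSet0_apply_eq_false_of_mem hσ (hA hi), hτ i (Or.inr fun h => h.2 hi)]

lemma DSet_eq_of_or_eq {σ₁ σ₂ τ₁ τ₂ : ℕ → Bool} (hσ₁ : σ₁ ∈ BSet0 A k l)
    (hσ₂ : σ₂ ∈ BSet0 A k l) (hτ₁ : τ₁ ∈ DSet A k l) (hτ₂ : τ₂ ∈ DSet A k l)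
    (h : (fun s => σ₁ s || τ₁ s) = fun s => σ₂ s || τ₂ s) : τ₁ = τ₂ := by
  funext s
  by_cases hs : s ∈ A k
  · simpa [BSet0_apply_eq_false_of_mem hσ₁ hs, BSet0_apply_eq_false_of_mem hσ₂ hs]
      using congrFun h s
  · rw [DSet_apply_eq_false_of_notMem hτ₁ hs, DSet_apply_eq_false_of_notMem hτ₂ hs]

lemma exists_BSet0_DSet_or_eq {ρ : ℕ → Bool} (hρ : ρ ∈ BSet A (k + l)) :
    ∃ σ ∈ BSet0 A k l, ∃ τ ∈ DSet A k l, (fun s => σ s || τ s) = ρ := by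
  classical
  refine ⟨fun s => !decide (s ∈ A k) && ρ s, ⟨?_, ?_⟩, fun s => decide (s ∈ A k) && ρ s, ?_, ?_⟩
  · rintro i (hi | hi)
    · simp [hρ i (Or.inl (by omega))]
    · simp [hi]
  · intro i _ hi
    simp [hρ i (Or.inl hi)]
  · rintro s (hs | hs)
    · simp [hρ s (Or.inl hs)]
    · by_cases hsk : s ∈ A k
      · simp [hρ s (Or.inr (by by_contra h; exact hs ⟨hsk, h⟩))]
      · simp [hsk]
  · funext s
    by_cases hs : s ∈ A k <;> simp [hs]

lemma not_countable_DSet (h : (A k \ A (k + l)).Infinite) : ¬ (DSet A k l).Countable := by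
  refine fun hD => not_countable_setOf_eq_false_of_notMem (h.sdiff (finite_Iio (k + l))) ?_
  refine hD.mono ?_
  intro τ hτ s hs
  exact hτ s fun ⟨hmem, hge⟩ => hs.elim hge (· hmem)

end Splitting

theorem stmt_18_general {G : Type*} [AddCommGroup G] [MetricSpace G] [CompleteSpace G]
    [IsTopologicalAddGroup G]
    (hmetinv : ∀ a b u : G, dist (a + u) (b + u) = dist a b)
    (t : ℕ → G)
    (hsum : Summable fun k => dist (0 : G) (t k))
    (hgood : Function.Injective (pSum t))
    (A : ℕ → Set ℕ)
    (hAdec : ∀ k, A (k + 1) ⊆ A k)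
    (hAinf : ∀ k, (A k \ A (k + 1)).Infinite)
    (k l : ℕ) (hl : 1 ≤ l) :
    (∀ τ₁ ∈ DSet A k l, ∀ τ₂ ∈ DSet A k l, τ₁ ≠ τ₂ →
        Disjoint ((fun x => x + pSum t τ₁) '' (pSum t '' BSet0 A k l))
          ((fun x => x + pSum t τ₂) '' (pSum t '' BSet0 A k l))) ∧
    (⋃ τ ∈ DSet A k l, (fun x => x + pSum t τ) '' (pSum t '' BSet0 A k l)) =
      pSum t '' BSet A (k + l) ∧
    ¬ (DSet A k l).Countable ∧
    Set.InjOn (pSum t) (DSet A k l) := by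
  have hA : Antitone A := antitone_nat_of_succ_le hAdec
  have hadd : ∀ {σ τ}, σ ∈ BSet0 A k l → τ ∈ DSet A k l →
      pSum t σ + pSum t τ = pSum t fun s => σ s || τ s := fun hσ hτ =>
    pSum_add_pSum hmetinv hsum (DSet_apply_eq_false_of_BSet0 hσ hτ)
  refine ⟨?_, ?_, ?_, hgood.injOn⟩
  · rintro τ₁ hτ₁ τ₂ hτ₂ hne
    rw [disjoint_left]
    rintro _ ⟨_, ⟨σ₁, hσ₁, rfl⟩, rfl⟩ ⟨_, ⟨σ₂, hσ₂, rfl⟩, hx⟩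
    simp only [hadd hσ₁ hτ₁, hadd hσ₂ hτ₂] at hx
    exact hne (DSet_eq_of_or_eq hσ₁ hσ₂ hτ₁ hτ₂ (hgood hx).symm)
  · ext x
    simp only [mem_iUnion, mem_image, exists_prop]
    constructor
    · rintro ⟨τ, hτ, _, ⟨σ, hσ, rfl⟩, rfl⟩
      exact ⟨_, or_mem_BSet_add (hA (Nat.le_add_right k l)) hσ hτ, (hadd hσ hτ).symm⟩
    · rintro ⟨ρ, hρ, rfl⟩
      obtain ⟨σ, hσ, τ, hτ, rfl⟩ := exists_BSet0_DSet_or_eq hρ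
      exact ⟨τ, hτ, _, ⟨σ, hσ, rfl⟩, hadd hσ hτ⟩
  · refine not_countable_DSet ((hAinf (k + l - 1)).mono ?_)
    rw [show k + l - 1 + 1 = k + l by omega]
    exact sdiff_subset_sdiff_left (hA (by omega))

/-- With `(t k)` a good sequence in an abelian Polish group `G` (with
compatible translation-invariant complete metric) and `(A k)` a decreasing sequence of
subsets of `ℕ` with `A 0 = ℕ` and `A k \ A (k+1)` infinite, for fixed `k, l ≥ 1` the
translates `C⁰_{k,l} + p(τ)`, `τ ∈ D_{k,l}`, are pairwise disjoint, their union is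
`C_{k+l}`, and there are uncountably many of them (`p` is injective on the uncountable
set `D_{k,l}`). -/
theorem stmt_18 {G : Type*} [AddCommGroup G] [MetricSpace G] [CompleteSpace G]
    [SeparableSpace G] [IsTopologicalAddGroup G]
    (hmetinv : ∀ a b u : G, dist (a + u) (b + u) = dist a b)
    (t : ℕ → G) (htinj : Function.Injective t)
    (hsum : Summable fun k => dist (0 : G) (t k))
    (hgood : Function.Injective (pSum t))
    (A : ℕ → Set ℕ) (hA0 : A 0 = Set.univ)
    (hAdec : ∀ k, A (k + 1) ⊆ A k)
    (hAinf : ∀ k, (A k \ A (k + 1)).Infinite)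
    (k l : ℕ) (hk : 1 ≤ k) (hl : 1 ≤ l) :
    (∀ τ₁ ∈ DSet A k l, ∀ τ₂ ∈ DSet A k l, τ₁ ≠ τ₂ →
        Disjoint ((fun x => x + pSum t τ₁) '' (pSum t '' BSet0 A k l))
          ((fun x => x + pSum t τ₂) '' (pSum t '' BSet0 A k l))) ∧
    (⋃ τ ∈ DSet A k l, (fun x => x + pSum t τ) '' (pSum t '' BSet0 A k l)) =
      pSum t '' BSet A (k + l) ∧
    ¬ (DSet A k l).Countable ∧
    Set.InjOn (pSum t) (DSet A k l) :=
  stmt_18_general hmetinv t hsum hgood A hAdec hAinf k l hl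
end
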